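/- arXiv:1512.09207 — 5 statements merged into one kernel-verified Lean document; each statement's English description precedes it below -/
import Mathlib

section
/- For each context-free grammar G = (N, T, P, S) there exists a context-free grammar G' = (N', T, P', S) in Dyck normal form such that L(G) = L(G'). -/
namespace CS

/-! ### Brackets and Dyck languages -/

/-- A bracket over `k` letters: `(i, true)` is the left bracket `[ᵢ` and
`(i, false)` is the right bracket `]ᵢ`. -/
abbrev Bracket (k : ℕ) : Type := Fin k × Bool

/-- The one-sided Dyck language `D_k` over `k` letters, i.e. the language generated by the
context-free grammar with rules `S → [ᵢ S ]ᵢ`, `S → SS`, `S → [ᵢ ]ᵢ` for `1 ≤ i ≤ k`. -/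
inductive IsDyck {k : ℕ} : List (Bracket k) → Prop
  | pair (i : Fin k) : IsDyck [(i, true), (i, false)]
  | wrap (i : Fin k) {w : List (Bracket k)} (hw : IsDyck w) :
      IsDyck ((i, true) :: w ++ [(i, false)])
  | concat {u v : List (Bracket k)} (hu : IsDyck u) (hv : IsDyck v) : IsDyck (u ++ v)

/-- The number of left (open) brackets in `w`. -/
def opens {k : ℕ} (w : List (Bracket k)) : ℕ := (w.filter fun b => b.2).length

/-- The number of right (close) brackets in `w`. -/
def closes {k : ℕ} (w : List (Bracket k)) : ℕ := (w.filter fun b => !b.2).length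

/-- A string is balanced if it has as many left brackets as right brackets and every prefix
has at least as many left brackets as right brackets.  (This is the balancedness of the image
of the string under the homomorphism `h` sending every `[ᵢ` to `[₁` and every `]ᵢ` to `]₁`.) -/
def IsBalanced {k : ℕ} (w : List (Bracket k)) : Prop :=
  opens w = closes w ∧ ∀ p : List (Bracket k), p <+: w → closes p ≤ opens p

/-- The substring `w_{i:j}` of `w` starting at the `i`-th position and ending at the `j`-th
position (1-indexed, inclusive). -/
def substr {α : Type*} (w : List α) (i j : ℕ) : List α := (w.drop (i - 1)).take (j - i + 1)

/-- `(i, j)` is a matched pair of `w` if `1 ≤ i ≤ j ≤ |w|` and `h(w_{i:j})` is balanced. -/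
def MatchedPair {k : ℕ} (w : List (Bracket k)) (i j : ℕ) : Prop :=
  1 ≤ i ∧ i ≤ j ∧ j ≤ w.length ∧ IsBalanced (substr w i j)

/-- `(i, j)` is a nested pair of `w` if it is a matched pair and either `j = i + 1` or
`(i + 1, j - 1)` is a matched pair. -/
def NestedPair {k : ℕ} (w : List (Bracket k)) (i j : ℕ) : Prop :=
  MatchedPair w i j ∧ (j = i + 1 ∨ MatchedPair w (i + 1) (j - 1))

/-- The homomorphism `h_{k'}` keeping only the brackets indexed by `k'` (sent to `[₁`/`]₁`)
and erasing all other brackets. -/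
def projIdx {k : ℕ} (i : Fin k) (w : List (Bracket k)) : List (Bracket 1) :=
  (w.filter fun b => decide (b.1 = i)).map fun b => ((0 : Fin 1), b.2)

/-! ### Grammars: Chomsky and Dyck normal forms -/

variable {T : Type}

/-- Chomsky normal form: every rule has the form `A → BC` or `A → a`, except possibly
`S → λ`, and the initial nonterminal never occurs on the right-hand side of a rule. -/
def IsChomskyNF (g : ContextFreeGrammar T) : Prop :=
  (∀ r ∈ g.rules,
      (∃ B C : g.NT, r.output = [Symbol.nonterminal B, Symbol.nonterminal C]) ∨
      (∃ a : T, r.output = [Symbol.terminal a]) ∨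
      (r.input = g.initial ∧ r.output = [])) ∧
  (∀ r ∈ g.rules, Symbol.nonterminal g.initial ∉ r.output)

/-- Dyck normal form (Definition 1.1):
(1) Chomsky normal form;
(2) if `A → a` with `A ≠ S` then no other rule rewrites `A`;
(3) if some rule `X → AB` is in `P` then no rule of the form `X' → B'A` is in `P`
    (equivalently, no nonterminal occurs both as a left member and as a right member of
    right-hand sides of two-nonterminal rules);
(4) for rules `X → AB` and `X' → A'B` one has `A = A'`, and for rules `X → AB` and
    `X' → AB'` one has `B = B'`. -/
def IsDyckNF (g : ContextFreeGrammar T) : Prop :=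
  IsChomskyNF g ∧
  (∀ r ∈ g.rules, ∀ a : T, r.output = [Symbol.terminal a] → r.input ≠ g.initial →
      ∀ r' ∈ g.rules, r'.input = r.input → r' = r) ∧
  (∀ r ∈ g.rules, ∀ r' ∈ g.rules, ∀ A B B' : g.NT,
      r.output = [Symbol.nonterminal A, Symbol.nonterminal B] →
      r'.output ≠ [Symbol.nonterminal B', Symbol.nonterminal A]) ∧
  (∀ r ∈ g.rules, ∀ r' ∈ g.rules, ∀ A A' B B' : g.NT,
      r.output = [Symbol.nonterminal A, Symbol.nonterminal B] →
      r'.output = [Symbol.nonterminal A', Symbol.nonterminal B'] →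
      (B = B' → A = A') ∧ (A = A' → B = B'))

/-- Extension of a map on nonterminals to a map on symbols, acting as the identity on
terminal symbols. -/
def mapSym {N N' : Type*} (f : N → N') : Symbol T N → Symbol T N'
  | .terminal t => .terminal t
  | .nonterminal A => .nonterminal (f A)

/-- One leftmost derivation step rewriting the (leftmost) nonterminal `A`:
everything to the left of the rewritten occurrence of `A` is terminal. -/
def LeftmostStep (g : ContextFreeGrammar T) (u v : List (Symbol T g.NT)) (A : g.NT) : Prop :=
  ∃ r ∈ g.rules, r.input = A ∧ ∃ (p : List T) (s : List (Symbol T g.NT)),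
    u = p.map Symbol.terminal ++ Symbol.nonterminal A :: s ∧
    v = p.map Symbol.terminal ++ r.output ++ s

/-- One leftmost derivation step. -/
def LeftmostProduces (g : ContextFreeGrammar T) (u v : List (Symbol T g.NT)) : Prop :=
  ∃ A : g.NT, LeftmostStep g u v A

/-- `LmTrace g u v l` : there is a leftmost derivation in `g` from `u` to `v` whose
consecutively rewritten nonterminals are listed (in order) in `l`. -/
inductive LmTrace (g : ContextFreeGrammar T) :
    List (Symbol T g.NT) → List (Symbol T g.NT) → List g.NT → Prop
  | refl (u : List (Symbol T g.NT)) : LmTrace g u u []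
  | tail {u v w : List (Symbol T g.NT)} {l : List g.NT} {A : g.NT}
      (huv : LmTrace g u v l) (hvw : LeftmostStep g v w A) : LmTrace g u w (l ++ [A])

/-- `t` is the trace-word of the terminal word `w` associated with some leftmost derivation of
`w` in `g`: the concatenation of the nonterminals consecutively rewritten in the derivation,
excluding the axiom (which is the first rewritten nonterminal).  Trace-words are only
associated with derivations `S ⇒ u₁ ⇒ ⋯ ⇒ u_{2n-1} = w` with `n ≥ 2`, i.e. `t ≠ []`. -/
def IsTraceWord (g : ContextFreeGrammar T) (w : List T) (t : List g.NT) : Prop :=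
  t ≠ [] ∧ LmTrace g [Symbol.nonterminal g.initial] (w.map Symbol.terminal) (g.initial :: t)

/-- `A` is rewritten by a terminal rule `A → t` (i.e. `φ(A) ∈ T`). -/
def RewritesToTerminal (g : ContextFreeGrammar T) (A : g.NT) : Prop :=
  ∃ r ∈ g.rules, r.input = A ∧ ∃ t : T, r.output = [Symbol.terminal t]

/-- The rule `A → a` belongs to the grammar. -/
def TerminalRule (g : ContextFreeGrammar T) (A : g.NT) (a : T) : Prop :=
  ∃ r ∈ g.rules, r.input = A ∧ r.output = [Symbol.terminal a]

/-- Linear grammar: all rules are of the forms `X → λ`, `X → t`, `X → tY`, `X → Yt`,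
`X → t₁Yt₂`. -/
def IsLinear (g : ContextFreeGrammar T) : Prop :=
  ∀ r ∈ g.rules,
    r.output = [] ∨
    (∃ t : T, r.output = [Symbol.terminal t]) ∨
    (∃ (t : T) (Y : g.NT), r.output = [Symbol.terminal t, Symbol.nonterminal Y]) ∨
    (∃ (t : T) (Y : g.NT), r.output = [Symbol.nonterminal Y, Symbol.terminal t]) ∨
    (∃ (t₁ t₂ : T) (Y : g.NT),
      r.output = [Symbol.terminal t₁, Symbol.nonterminal Y, Symbol.terminal t₂])

/-- Linear-Dyck normal form: Dyck normal form with `N⁽³⁾ = ∅`, i.e. in every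
two-nonterminal rule `X → AB` at least one of `A`, `B` is rewritten by a terminal rule. -/
def IsLinearDyckNF (g : ContextFreeGrammar T) : Prop :=
  IsDyckNF g ∧
  ∀ r ∈ g.rules, ∀ A B : g.NT,
    r.output = [Symbol.nonterminal A, Symbol.nonterminal B] →
    (RewritesToTerminal g A ∨ RewritesToTerminal g B)

/-- `(A, B)` is a pairwise pair of brackets in `N⁽¹⁾`: it occurs as the right-hand side of a
two-nonterminal rule and both members are rewritten by terminal rules. -/
def IsN1Pair (g : ContextFreeGrammar T) (A B : g.NT) : Prop :=
  (∃ r ∈ g.rules, r.output = [Symbol.nonterminal A, Symbol.nonterminal B]) ∧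
  RewritesToTerminal g A ∧ RewritesToTerminal g B

/-- `C` is a bracket of some pair in `N⁽¹⁾`. -/
def IsN1Bracket (g : ContextFreeGrammar T) (C : g.NT) : Prop :=
  ∃ A B : g.NT, IsN1Pair g A B ∧ (C = A ∨ C = B)

/-- The grammar over terminals `T` whose nonterminals are the axiom `S` (`none`) together
with the `2k` brackets `[₁, …, [ₖ, ]₁, …, ]ₖ`, with the given rules. -/
abbrev bracketGrammar (k : ℕ) (rs : Finset (ContextFreeRule T (Option (Bracket k)))) :
    ContextFreeGrammar T :=
  ⟨Option (Bracket k), none, rs⟩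

/-!
The grammar is first brought into Chomsky normal form in the classical way: a fresh start
symbol, right-hand sides cut into chains of binary rules, nullable nonterminals erased, unit
rules bypassed. Every occurrence of a nonterminal on a right-hand side `A → BC` of a grammar in
Chomsky normal form is then replaced by its own copy, indexed by the rule, by the side, and by
the terminal (if any) that each of the two members is committed to produce. Left and right
members are then distinct, each member determines its partner, and a copy committed to a
terminal has no other rule; a derivation is replayed by choosing, at each occurrence, the copy
committed to the rule that rewrites it.
-/

open ContextFreeGrammar

attribute [local instance] Classical.propDecidable

section Derivations

variable {g g' : ContextFreeGrammar T}

lemma produces_of_mem {A : g.NT} {u : List (Symbol T g.NT)} (h : ⟨A, u⟩ ∈ g.rules) :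
    g.Produces [.nonterminal A] u :=
  ⟨_, h, ContextFreeRule.Rewrites.input_output⟩

lemma _root_.ContextFreeGrammar.Derives.append₂ {u u' v v' : List (Symbol T g.NT)}
    (hu : g.Derives u u') (hv : g.Derives v v') : g.Derives (u ++ v) (u' ++ v') :=
  (hu.append_right v).trans (hv.append_left u')

lemma _root_.ContextFreeGrammar.Derives.flatMap (φ : Symbol T g.NT → List (Symbol T g'.NT))
    (hφ : ∀ r ∈ g.rules, g'.Derives (φ (.nonterminal r.input)) (r.output.flatMap φ))
    {u v : List (Symbol T g.NT)} (h : g.Derives u v) :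
    g'.Derives (u.flatMap φ) (v.flatMap φ) := by
  induction h with
  | refl => rfl
  | tail _ step ih =>
    obtain ⟨r, hr, hrw⟩ := step
    obtain ⟨p, q, rfl, rfl⟩ := hrw.exists_parts
    refine ih.trans ?_
    simpa using (Derives.refl (g := g') (p.flatMap φ)).append₂ ((hφ r hr).append₂ (.refl _))

lemma language_le_of_simulation (φ : Symbol T g.NT → List (Symbol T g'.NT))
    (hterm : ∀ a, φ (.terminal a) = [.terminal a])
    (hinit : g'.Derives [.nonterminal g'.initial] (φ (.nonterminal g.initial)))
    (hφ : ∀ r ∈ g.rules, g'.Derives (φ (.nonterminal r.input)) (r.output.flatMap φ)) :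
    g.language ≤ g'.language := by
  intro w hw
  have h := hinit.trans (by simpa using hw.flatMap φ hφ)
  rwa [List.flatMap_map, List.flatMap_congr fun a _ => hterm a, ← List.map_eq_flatMap] at h

end Derivations

section Splits

variable {N : Type*}

inductive Splits (P : N → List T → Prop) : List (Symbol T N) → List T → Prop
  | nil : Splits P [] []
  | terminal (a : T) {u : List (Symbol T N)} {w : List T} :
      Splits P u w → Splits P (.terminal a :: u) (a :: w)
  | nonterminal {A : N} {v : List T} {u : List (Symbol T N)} {w : List T} :
      P A v → Splits P u w → Splits P (.nonterminal A :: u) (v ++ w)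

variable {P : N → List T → Prop}

@[simp]
lemma splits_nil_iff {w : List T} : Splits P [] w ↔ w = [] :=
  ⟨by rintro ⟨⟩; rfl, by rintro rfl; exact .nil⟩

@[simp]
lemma splits_terminal_cons_iff {a : T} {u : List (Symbol T N)} {w : List T} :
    Splits P (.terminal a :: u) w ↔ ∃ w', w = a :: w' ∧ Splits P u w' :=
  ⟨by rintro ⟨⟩; exact ⟨_, rfl, ‹_›⟩, by rintro ⟨w', rfl, h⟩; exact h.terminal a⟩

@[simp]
lemma splits_nonterminal_cons_iff {A : N} {u : List (Symbol T N)} {w : List T} :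
    Splits P (.nonterminal A :: u) w ↔ ∃ v w', w = v ++ w' ∧ P A v ∧ Splits P u w' :=
  ⟨by rintro ⟨⟩; exact ⟨_, _, rfl, ‹_›, ‹_›⟩,
    by rintro ⟨v, w', rfl, hv, h⟩; exact h.nonterminal hv⟩

lemma splits_map_terminal (w : List T) : Splits P (w.map Symbol.terminal) w := by
  induction w with
  | nil => exact .nil
  | cons a w ih => exact ih.terminal a

lemma Splits.append {u u' : List (Symbol T N)} {w w' : List T} (h : Splits P u w)
    (h' : Splits P u' w') : Splits P (u ++ u') (w ++ w') := by
  induction h with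
  | nil => exact h'
  | terminal a _ ih => exact ih.terminal a
  | nonterminal hv _ ih => simpa using ih.nonterminal hv

lemma splits_append_iff {u u' : List (Symbol T N)} {w : List T} :
    Splits P (u ++ u') w ↔ ∃ w₁ w₂, w = w₁ ++ w₂ ∧ Splits P u w₁ ∧ Splits P u' w₂ := by
  refine ⟨fun h => ?_, fun ⟨w₁, w₂, hw, h₁, h₂⟩ => hw ▸ h₁.append h₂⟩
  induction u generalizing w with
  | nil => exact ⟨[], w, rfl, .nil, h⟩
  | cons s u ih =>
    cases s with
    | terminal a =>
      obtain ⟨w', rfl, h'⟩ := splits_terminal_cons_iff.mp h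
      obtain ⟨w₁, w₂, rfl, h₁, h₂⟩ := ih h'
      exact ⟨a :: w₁, w₂, rfl, h₁.terminal a, h₂⟩
    | nonterminal A =>
      obtain ⟨v, w', rfl, hv, h'⟩ := splits_nonterminal_cons_iff.mp h
      obtain ⟨w₁, w₂, rfl, h₁, h₂⟩ := ih h'
      exact ⟨v ++ w₁, w₂, by simp, h₁.nonterminal hv, h₂⟩

end Splits

section Induction

variable {g : ContextFreeGrammar T}

lemma Splits.derives {P : g.NT → List T → Prop}
    (hP : ∀ A v, P A v → g.Derives [.nonterminal A] (v.map Symbol.terminal))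
    {u : List (Symbol T g.NT)} {w : List T} (h : Splits P u w) :
    g.Derives u (w.map Symbol.terminal) := by
  induction h with
  | nil => rfl
  | terminal a _ ih => exact (Derives.refl [.terminal a]).append₂ ih
  | nonterminal hv _ ih => simpa using (hP _ _ hv).append₂ ih

theorem derives_induction {P : g.NT → List T → Prop}
    (step : ∀ r ∈ g.rules, ∀ w,
      Splits (fun B v => g.Derives [.nonterminal B] (v.map Symbol.terminal) ∧ P B v)
        r.output w → P r.input w)
    {A : g.NT} {w : List T} (h : g.Derives [.nonterminal A] (w.map Symbol.terminal)) :
    P A w := by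
  set Q : g.NT → List T → Prop :=
    fun B v => g.Derives [.nonterminal B] (v.map Symbol.terminal) ∧ P B v
  suffices ∀ u, g.Derives u (w.map Symbol.terminal) → Splits Q u w by
    exact (by simpa [Q] using this _ h : Q A w).2
  intro u hu
  induction hu using Relation.ReflTransGen.head_induction_on with
  | refl => exact splits_map_terminal w
  | head hstep _ ih =>
    obtain ⟨r, hr, hrw⟩ := hstep
    obtain ⟨p, q, rfl, rfl⟩ := hrw.exists_parts
    obtain ⟨w₁₂, w₃, rfl, h₁₂, h₃⟩ := splits_append_iff.mp ih
    obtain ⟨w₁, w₂, rfl, h₁, h₂⟩ := splits_append_iff.mp h₁₂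
    have hA : Q r.input w₂ :=
      ⟨(produces_of_mem hr).trans_derives (h₂.derives fun _ _ h => h.1), step r hr w₂ h₂⟩
    simpa using h₁.append ((Splits.nil.nonterminal hA).append h₃)

end Induction

section BinaryNF

variable {g : ContextFreeGrammar T}

def IsBinaryNF (g : ContextFreeGrammar T) : Prop :=
  ∀ r ∈ g.rules, r.output = [] ∨ (∃ a, r.output = [.terminal a]) ∨
    (∃ B, r.output = [.nonterminal B]) ∨ ∃ B C, r.output = [.nonterminal B, .nonterminal C]

def InitialNotOnRHS (g : ContextFreeGrammar T) : Prop :=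
  ∀ r ∈ g.rules, .nonterminal g.initial ∉ r.output

theorem IsBinaryNF.derives_induction (hg : IsBinaryNF g) {P : g.NT → List T → Prop}
    (eps : ∀ A, ⟨A, []⟩ ∈ g.rules → P A [])
    (term : ∀ A a, ⟨A, [.terminal a]⟩ ∈ g.rules → P A [a])
    (unit : ∀ A B w, ⟨A, [.nonterminal B]⟩ ∈ g.rules →
      g.Derives [.nonterminal B] (w.map Symbol.terminal) → P B w → P A w)
    (pair : ∀ A B C u v, ⟨A, [.nonterminal B, .nonterminal C]⟩ ∈ g.rules →
      g.Derives [.nonterminal B] (u.map Symbol.terminal) → P B u →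
      g.Derives [.nonterminal C] (v.map Symbol.terminal) → P C v → P A (u ++ v))
    {A : g.NT} {w : List T} (h : g.Derives [.nonterminal A] (w.map Symbol.terminal)) :
    P A w := by
  refine CS.derives_induction (fun ⟨A, s⟩ hr w hw => ?_) h
  rcases hg _ hr with rfl | ⟨a, rfl⟩ | ⟨B, rfl⟩ | ⟨B, C, rfl⟩
  · obtain rfl := splits_nil_iff.mp hw
    exact eps A hr
  · obtain ⟨_, rfl, rfl⟩ := by simpa using hw
    exact term A a hr
  · obtain ⟨hB, hPB⟩ := by simpa using hw
    exact unit A B w hr hB hPB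
  · obtain ⟨u, v, rfl, ⟨hB, hPB⟩, hC, hPC⟩ := by simpa using hw
    exact pair A B C u v hr hB hPB hC hPC

end BinaryNF

section Binarize

/-- `suffix r i` derives the suffix `r.output.drop i` and `symbol r i` its first symbol
`r.output[i]`, so that `A → s₀ ⋯ sₙ₋₁` is simulated by `A → suffix r 0`,
`suffix r i → (symbol r i) (suffix r (i+1))`, `suffix r n → ε` and `symbol r i → sᵢ`. -/
inductive BinNT (T : Type) (N : Type*)
  | start
  | lift (A : N)
  | suffix (r : ContextFreeRule T N) (i : ℕ)
  | symbol (r : ContextFreeRule T N) (i : ℕ)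

variable {N : Type*}

noncomputable def binRules (r : ContextFreeRule T N) : Finset (ContextFreeRule T (BinNT T N)) :=
  {⟨.lift r.input, [.nonterminal (.suffix r 0)]⟩, ⟨.suffix r r.output.length, []⟩} ∪
    (Finset.range r.output.length).biUnion fun i =>
      {⟨.suffix r i, [.nonterminal (.symbol r i), .nonterminal (.suffix r (i + 1))]⟩,
        ⟨.symbol r i, r.output[i]?.toList.map (mapSym .lift)⟩}

noncomputable abbrev binarize (g : ContextFreeGrammar T) : ContextFreeGrammar T where
  NT := BinNT T g.NT
  initial := .start
  rules := insert ⟨.start, [.nonterminal (.lift g.initial)]⟩ (g.rules.biUnion binRules)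

variable {g : ContextFreeGrammar T}

lemma mem_binarize_rules {ρ : ContextFreeRule T (BinNT T g.NT)} :
    ρ ∈ (binarize g).rules ↔ ρ = ⟨.start, [.nonterminal (.lift g.initial)]⟩ ∨
      ∃ r ∈ g.rules, ρ ∈ binRules r := by
  simp [binarize]

lemma mem_binRules {r : ContextFreeRule T N} {ρ : ContextFreeRule T (BinNT T N)} :
    ρ ∈ binRules r ↔ ρ = ⟨.lift r.input, [.nonterminal (.suffix r 0)]⟩ ∨
      ρ = ⟨.suffix r r.output.length, []⟩ ∨ ∃ i < r.output.length,
        ρ = ⟨.suffix r i, [.nonterminal (.symbol r i), .nonterminal (.suffix r (i + 1))]⟩ ∨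
        ρ = ⟨.symbol r i, r.output[i]?.toList.map (mapSym .lift)⟩ := by
  simp [binRules]

lemma binarize_derives_suffix {r : ContextFreeRule T g.NT} (hr : r ∈ g.rules) {i : ℕ}
    (hi : i ≤ r.output.length) : (binarize g).Derives [.nonterminal (.suffix r i)]
      ((r.output.drop i).map (mapSym .lift)) := by
  have mem {ρ} (hρ : ρ ∈ binRules r) : ρ ∈ (binarize g).rules :=
    mem_binarize_rules.mpr (.inr ⟨r, hr, hρ⟩)
  induction hi using Nat.decreasingInduction with
  | self => simpa using (produces_of_mem (mem (mem_binRules.mpr (.inr (.inl rfl))))).single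
  | of_succ i hi ih =>
    have hchain := produces_of_mem (mem (mem_binRules.mpr (.inr (.inr ⟨i, hi, .inl rfl⟩))))
    have hsymbol := produces_of_mem (mem (mem_binRules.mpr (.inr (.inr ⟨i, hi, .inr rfl⟩))))
    rw [List.drop_eq_getElem?_toList_append, List.map_append]
    exact hchain.trans_derives (hsymbol.single.append₂ ih)

lemma isBinaryNF_binarize : IsBinaryNF (binarize g) := by
  intro ρ hρ
  rcases mem_binarize_rules.mp hρ with rfl | ⟨r, -, hρ⟩
  · exact .inr (.inr (.inl ⟨_, rfl⟩))
  rcases mem_binRules.mp hρ with rfl | rfl | ⟨i, -, rfl | rfl⟩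
  · exact .inr (.inr (.inl ⟨_, rfl⟩))
  · exact .inl rfl
  · exact .inr (.inr (.inr ⟨_, _, rfl⟩))
  · rcases r.output[i]? with _ | _ | B
    · exact .inl rfl
    · exact .inr (.inl ⟨_, rfl⟩)
    · exact .inr (.inr (.inl ⟨.lift B, rfl⟩))

lemma initialNotOnRHS_binarize : InitialNotOnRHS (binarize g) := by
  intro ρ hρ
  rcases mem_binarize_rules.mp hρ with rfl | ⟨r, -, hρ⟩
  · simp
  rcases mem_binRules.mp hρ with rfl | rfl | ⟨i, -, rfl | rfl⟩
  · simp
  · simp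
  · simp
  · rcases r.output[i]? with _ | _ | B <;> simp [mapSym]

def unbinarize (g : ContextFreeGrammar T) : Symbol T (BinNT T g.NT) → List (Symbol T g.NT)
  | .terminal a => [.terminal a]
  | .nonterminal .start => [.nonterminal g.initial]
  | .nonterminal (.lift A) => [.nonterminal A]
  | .nonterminal (.suffix r i) => r.output.drop i
  | .nonterminal (.symbol r i) => r.output[i]?.toList

lemma unbinarize_mapSym_lift (s : Symbol T g.NT) : unbinarize g (mapSym .lift s) = [s] := by
  cases s <;> rfl

lemma language_binarize : (binarize g).language = g.language := by
  refine le_antisymm (language_le_of_simulation (unbinarize g) (fun _ => rfl) (.refl _) ?_)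
    (language_le_of_simulation (fun s => [mapSym .lift s]) (fun _ => rfl)
      (produces_of_mem (by simp [mapSym])).single fun r hr => ?_)
  · intro ρ hρ
    rcases mem_binarize_rules.mp hρ with rfl | ⟨r, hr, hρ⟩
    · rfl
    rcases mem_binRules.mp hρ with rfl | rfl | ⟨i, -, rfl | rfl⟩
    · simpa [unbinarize] using (produces_of_mem hr).single
    · simpa [unbinarize] using Derives.refl (g := g) []
    · simpa [unbinarize, ← List.drop_eq_getElem?_toList_append] using
        Derives.refl (g := g) (r.output.drop i)
    · simp only [List.flatMap_map, unbinarize_mapSym_lift, List.flatMap_singleton']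
      exact .refl _
  · have hstart := produces_of_mem (g := binarize g)
      (mem_binarize_rules.mpr (.inr ⟨r, hr, mem_binRules.mpr (.inl rfl)⟩))
    rw [← List.map_eq_flatMap, mapSym]
    simpa using hstart.trans_derives (binarize_derives_suffix hr (Nat.zero_le _))

end Binarize

section EraseEpsilon

def Nullable (g : ContextFreeGrammar T) (A : g.NT) : Prop := g.Derives [.nonterminal A] []

def EpsilonOnlyAtInitial (g : ContextFreeGrammar T) : Prop :=
  ∀ r ∈ g.rules, r.output = [] → r.input = g.initial

variable (g : ContextFreeGrammar T)

noncomputable abbrev eraseEpsilon : ContextFreeGrammar T where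
  NT := g.NT
  initial := g.initial
  rules := g.rules.filter (·.output ≠ []) ∪
    ((g.rules.filter fun r =>
        ∃ B C, r.output = [.nonterminal B, .nonterminal C] ∧ Nullable g C).image
      fun r => ⟨r.input, r.output.take 1⟩) ∪
    ((g.rules.filter fun r =>
        ∃ B C, r.output = [.nonterminal B, .nonterminal C] ∧ Nullable g B).image
      fun r => ⟨r.input, r.output.drop 1⟩) ∪
    if Nullable g g.initial then {⟨g.initial, []⟩} else ∅

variable {g}

lemma mem_eraseEpsilon_rules {ρ : ContextFreeRule T g.NT} :
    ρ ∈ (eraseEpsilon g).rules ↔ (ρ ∈ g.rules ∧ ρ.output ≠ []) ∨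
      (∃ A B C, ⟨A, [.nonterminal B, .nonterminal C]⟩ ∈ g.rules ∧
        (ρ = ⟨A, [.nonterminal B]⟩ ∧ Nullable g C ∨ ρ = ⟨A, [.nonterminal C]⟩ ∧ Nullable g B)) ∨
      (Nullable g g.initial ∧ ρ = ⟨g.initial, []⟩) := by
  simp only [Finset.mem_union, Finset.mem_filter, Finset.mem_image]
  constructor
  · rintro (((h | ⟨⟨A, _⟩, ⟨hr, B, C, rfl, hC⟩, rfl⟩) | ⟨⟨A, _⟩, ⟨hr, B, C, rfl, hB⟩, rfl⟩) |
      h)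
    · exact .inl h
    · exact .inr (.inl ⟨A, B, C, hr, .inl ⟨rfl, hC⟩⟩)
    · exact .inr (.inl ⟨A, B, C, hr, .inr ⟨rfl, hB⟩⟩)
    · split_ifs at h with hS
      · exact .inr (.inr ⟨hS, Finset.mem_singleton.mp h⟩)
      · simp at h
  · rintro (h | ⟨A, B, C, hr, ⟨rfl, hC⟩ | ⟨rfl, hB⟩⟩ | ⟨hS, rfl⟩)
    · exact .inl (.inl (.inl h))
    · exact .inl (.inl (.inr ⟨_, ⟨hr, B, C, rfl, hC⟩, rfl⟩))
    · exact .inl (.inr ⟨_, ⟨hr, B, C, rfl, hB⟩, rfl⟩)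
    · exact .inr (by simp [hS])

lemma isBinaryNF_eraseEpsilon (hg : IsBinaryNF g) : IsBinaryNF (eraseEpsilon g) := by
  intro ρ hρ
  rcases mem_eraseEpsilon_rules.mp hρ with
    ⟨hρ, -⟩ | ⟨A, B, C, -, ⟨rfl, -⟩ | ⟨rfl, -⟩⟩ | ⟨-, rfl⟩
  · exact hg ρ hρ
  · exact .inr (.inr (.inl ⟨B, rfl⟩))
  · exact .inr (.inr (.inl ⟨C, rfl⟩))
  · exact .inl rfl

lemma epsilonOnlyAtInitial_eraseEpsilon : EpsilonOnlyAtInitial (eraseEpsilon g) := by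
  intro ρ hρ hε
  rcases mem_eraseEpsilon_rules.mp hρ with
    ⟨-, hne⟩ | ⟨A, B, C, -, ⟨rfl, -⟩ | ⟨rfl, -⟩⟩ | ⟨-, rfl⟩
  · exact absurd hε hne
  · simp at hε
  · simp at hε
  · rfl

lemma initialNotOnRHS_eraseEpsilon (hg : InitialNotOnRHS g) :
    InitialNotOnRHS (eraseEpsilon g) := by
  intro ρ hρ
  rcases mem_eraseEpsilon_rules.mp hρ with
    ⟨hρ, -⟩ | ⟨A, B, C, hr, ⟨rfl, -⟩ | ⟨rfl, -⟩⟩ | ⟨-, rfl⟩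
  · exact hg ρ hρ
  · exact fun h => hg _ hr (by simp_all)
  · exact fun h => hg _ hr (by simp_all)
  · simp

lemma language_eraseEpsilon_le : (eraseEpsilon g).language ≤ g.language := by
  refine language_le_of_simulation (fun s => [s]) (fun _ => rfl) (.refl _) fun ρ hρ => ?_
  rw [List.flatMap_singleton']
  rcases mem_eraseEpsilon_rules.mp hρ with
    ⟨hρ, -⟩ | ⟨A, B, C, hr, ⟨rfl, hC⟩ | ⟨rfl, hB⟩⟩ | ⟨hS, rfl⟩
  · exact (produces_of_mem hρ).single
  · simpa using (produces_of_mem hr).trans_derives ((Derives.refl [.nonterminal B]).append₂ hC)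
  · simpa using (produces_of_mem hr).trans_derives (hB.append₂ (Derives.refl [.nonterminal C]))
  · exact hS

lemma eraseEpsilon_derives_of_ne_nil (hg : IsBinaryNF g) {A : g.NT} {w : List T}
    (h : g.Derives [.nonterminal A] (w.map Symbol.terminal)) (hw : w ≠ []) :
    (eraseEpsilon g).Derives [.nonterminal A] (w.map Symbol.terminal) := by
  have keep {A : g.NT} {s : List (Symbol T g.NT)} (h : ⟨A, s⟩ ∈ g.rules) (hs : s ≠ []) :
      (eraseEpsilon g).Produces [.nonterminal A] s :=
    produces_of_mem (mem_eraseEpsilon_rules.mpr (.inl ⟨h, hs⟩))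
  refine hg.derives_induction (P := fun A w => w ≠ [] →
    (eraseEpsilon g).Derives [.nonterminal A] (w.map Symbol.terminal))
    ?eps ?term ?unit ?pair h hw
  case eps => exact fun _ _ hw => absurd rfl hw
  case term => exact fun A a hr _ => (keep hr (by simp)).single
  case unit => exact fun A B w hr _ ih hw => (keep hr (by simp)).trans_derives (ih hw)
  case pair =>
    intro A B C u v hr hB ihB hC ihC hw
    rcases eq_or_ne u [] with rfl | hu
    · have hshort := produces_of_mem (g := eraseEpsilon g) (mem_eraseEpsilon_rules.mpr
        (.inr (.inl ⟨A, B, C, hr, .inr ⟨rfl, by simpa [Nullable] using hB⟩⟩)))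
      exact hshort.trans_derives (ihC (by simpa using hw))
    rcases eq_or_ne v [] with rfl | hv
    · have hshort := produces_of_mem (g := eraseEpsilon g) (mem_eraseEpsilon_rules.mpr
        (.inr (.inl ⟨A, B, C, hr, .inl ⟨rfl, by simpa [Nullable] using hC⟩⟩)))
      simpa using hshort.trans_derives (ihB hu)
    · simpa using (keep hr (by simp)).trans_derives
        (Derives.append₂ (g := eraseEpsilon g) (u := [.nonterminal B]) (ihB hu) (ihC hv))

lemma language_eraseEpsilon (hg : IsBinaryNF g) : (eraseEpsilon g).language = g.language := by
  refine le_antisymm language_eraseEpsilon_le fun w hw => ?_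
  rcases eq_or_ne w [] with rfl | hne
  · exact (produces_of_mem (mem_eraseEpsilon_rules.mpr (.inr (.inr ⟨hw, rfl⟩)))).single
  · exact eraseEpsilon_derives_of_ne_nil hg hw hne

end EraseEpsilon

section EraseUnits

def UnitReaches (g : ContextFreeGrammar T) : g.NT → g.NT → Prop :=
  Relation.ReflTransGen fun A B => ⟨A, [.nonterminal B]⟩ ∈ g.rules

def IsUnitRule {N : Type*} (r : ContextFreeRule T N) : Prop := ∃ B, r.output = [.nonterminal B]

/-- The first rule of each pair only supplies the left-hand side `A`: whatever reaches a
left-hand side through unit rules is itself one. -/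
noncomputable abbrev eraseUnits (g : ContextFreeGrammar T) : ContextFreeGrammar T where
  NT := g.NT
  initial := g.initial
  rules := ((g.rules ×ˢ g.rules).filter fun p =>
      UnitReaches g p.1.input p.2.input ∧ ¬ IsUnitRule p.2).image fun p => ⟨p.1.input, p.2.output⟩

variable {g : ContextFreeGrammar T}

lemma UnitReaches.derives {A B : g.NT} (h : UnitReaches g A B) :
    g.Derives [.nonterminal A] [.nonterminal B] := by
  induction h with
  | refl => rfl
  | tail _ hr ih => exact ih.trans_produces (produces_of_mem hr)

lemma mem_eraseUnits_rules {ρ : ContextFreeRule T g.NT} :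
    ρ ∈ (eraseUnits g).rules ↔ ∃ A, ∃ r ∈ g.rules, UnitReaches g A r.input ∧ ¬ IsUnitRule r ∧
      ρ = ⟨A, r.output⟩ := by
  simp only [Finset.mem_image, Finset.mem_filter, Finset.mem_product, Prod.exists]
  constructor
  · rintro ⟨r₀, r, ⟨⟨-, hr⟩, hreach, hunit⟩, rfl⟩
    exact ⟨_, r, hr, hreach, hunit, rfl⟩
  · rintro ⟨A, r, hr, hreach, hunit, rfl⟩
    obtain ⟨r₀, hr₀, rfl⟩ : ∃ r₀ ∈ g.rules, r₀.input = A := by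
      rcases hreach.cases_head with rfl | ⟨B, hAB, -⟩
      exacts [⟨r, hr, rfl⟩, ⟨_, hAB, rfl⟩]
    exact ⟨r₀, r, ⟨⟨hr₀, hr⟩, hreach, hunit⟩, rfl⟩

lemma language_eraseUnits_le : (eraseUnits g).language ≤ g.language := by
  refine language_le_of_simulation (fun s => [s]) (fun _ => rfl) (.refl _) fun ρ hρ => ?_
  obtain ⟨A, r, hr, hreach, -, rfl⟩ := mem_eraseUnits_rules.mp hρ
  rw [List.flatMap_singleton']
  exact hreach.derives.trans_produces (produces_of_mem hr)

lemma language_eraseUnits (hg : IsBinaryNF g) : (eraseUnits g).language = g.language := by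
  refine le_antisymm language_eraseUnits_le fun w hw => ?_
  have bypass {A : g.NT} {s : List (Symbol T g.NT)} (hr : ⟨A, s⟩ ∈ g.rules)
      (hs : ¬ IsUnitRule (⟨A, s⟩ : ContextFreeRule T g.NT)) {Z : g.NT} (hZ : UnitReaches g Z A) :
      (eraseUnits g).Produces [.nonterminal Z] s :=
    produces_of_mem (mem_eraseUnits_rules.mpr ⟨Z, _, hr, hZ, hs, rfl⟩)
  refine hg.derives_induction (P := fun A w => ∀ Z, UnitReaches g Z A →
    (eraseUnits g).Derives [.nonterminal Z] (w.map Symbol.terminal))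
    ?eps ?term ?unit ?pair hw g.initial .refl
  case eps => exact fun A hr Z hZ => (bypass hr (by simp [IsUnitRule]) hZ).single
  case term => exact fun A a hr Z hZ => (bypass hr (by simp [IsUnitRule]) hZ).single
  case unit => exact fun A B w hr _ ih Z hZ => ih Z (hZ.tail hr)
  case pair =>
    intro A B C u v hr _ ihB _ ihC Z hZ
    simpa using (bypass hr (by simp [IsUnitRule]) hZ).trans_derives
      (Derives.append₂ (g := eraseUnits g) (u := [.nonterminal B]) (ihB B .refl) (ihC C .refl))

lemma UnitReaches.eq_initial (hS : InitialNotOnRHS g) {A : g.NT}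
    (h : UnitReaches g A g.initial) : A = g.initial := by
  rcases h.cases_tail with rfl | ⟨B, -, hB⟩
  · rfl
  · exact absurd (by simp) (hS _ hB)

lemma isChomskyNF_eraseUnits (hg : IsBinaryNF g) (hε : EpsilonOnlyAtInitial g)
    (hS : InitialNotOnRHS g) : IsChomskyNF (eraseUnits g) := by
  refine ⟨fun ρ hρ => ?_, fun ρ hρ => ?_⟩
  · obtain ⟨A, r, hr, hreach, hunit, rfl⟩ := mem_eraseUnits_rules.mp hρ
    rcases hg r hr with hε' | ⟨a, ha⟩ | ⟨B, hB⟩ | ⟨B, C, hBC⟩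
    · exact .inr (.inr ⟨(hε r hr hε' ▸ hreach).eq_initial hS, hε'⟩)
    · exact .inr (.inl ⟨a, ha⟩)
    · exact absurd ⟨B, hB⟩ hunit
    · exact .inl ⟨B, C, hBC⟩
  · obtain ⟨A, r, hr, -, -, rfl⟩ := mem_eraseUnits_rules.mp hρ
    exact hS r hr

end EraseUnits

theorem exists_isChomskyNF (g : ContextFreeGrammar T) :
    ∃ g' : ContextFreeGrammar T, IsChomskyNF g' ∧ g'.language = g.language := by
  have hbin := isBinaryNF_binarize (g := g)
  refine ⟨eraseUnits (eraseEpsilon (binarize g)), isChomskyNF_eraseUnits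
    (isBinaryNF_eraseEpsilon hbin) epsilonOnlyAtInitial_eraseEpsilon
    (initialNotOnRHS_eraseEpsilon initialNotOnRHS_binarize), ?_⟩
  rw [language_eraseUnits (isBinaryNF_eraseEpsilon hbin), language_eraseEpsilon hbin,
    language_binarize]

section Dyck

variable {N : Type*}

def IsPairRule (r : ContextFreeRule T N) : Prop :=
  ∃ B C, r.output = [.nonterminal B, .nonterminal C]

def terminalOutput? (r : ContextFreeRule T N) : Option T :=
  match r.output with
  | [.terminal a] => some a
  | _ => none

/-- An occurrence of the left (`isRight = false`) or right nonterminal of the pair rule `rule`,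
committed to the tags `leftTag`, `rightTag` of the two occurrences: `some a` if it is to be
rewritten by `a`, `none` if by a pair rule. -/
structure Slot (T : Type) (N : Type*) where
  rule : ContextFreeRule T N
  leftTag : Option T
  rightTag : Option T
  isRight : Bool

def Slot.child (c : Slot T N) : N :=
  match c.rule.output, c.isRight with
  | [.nonterminal B, _], false => B
  | [_, .nonterminal C], true => C
  | _, _ => c.rule.input

def Slot.tag (c : Slot T N) : Option T := if c.isRight then c.rightTag else c.leftTag

def pairOutput (r : ContextFreeRule T N) (i j : Option T) :
    List (Symbol T (Option (Slot T N))) :=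
  [.nonterminal (some ⟨r, i, j, false⟩), .nonterminal (some ⟨r, i, j, true⟩)]

lemma Slot.child_mk {r : ContextFreeRule T N} {B C : N}
    (h : r.output = [.nonterminal B, .nonterminal C]) {i j : Option T} {b : Bool} :
    (⟨r, i, j, b⟩ : Slot T N).child = if b then C else B := by
  cases b <;> simp [Slot.child, h]

variable (g : ContextFreeGrammar T)

def origin : Option (Slot T g.NT) → g.NT
  | none => g.initial
  | some c => c.child

def Admits (X : Option (Slot T g.NT)) (r : ContextFreeRule T g.NT) : Prop :=
  r.input = origin g X ∧ ∀ c ∈ X, terminalOutput? r = c.tag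

noncomputable def tags : Finset (Option T) := g.rules.image terminalOutput?

noncomputable def slots : Finset (Option (Slot T g.NT)) :=
  insert none (((g.rules.filter IsPairRule) ×ˢ tags g ×ˢ tags g ×ˢ Finset.univ).image
    fun p => some ⟨p.1, p.2.1, p.2.2.1, p.2.2.2⟩)

noncomputable abbrev dyckify : ContextFreeGrammar T where
  NT := Option (Slot T g.NT)
  initial := none
  rules :=
    (((slots g ×ˢ g.rules) ×ˢ (tags g ×ˢ tags g)).filter fun p =>
        Admits g p.1.1 p.1.2 ∧ IsPairRule p.1.2).image
      (fun p => ⟨p.1.1, pairOutput p.1.2 p.2.1 p.2.2⟩) ∪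
    ((slots g ×ˢ g.rules).filter fun p => Admits g p.1 p.2 ∧ ¬ IsPairRule p.2).image
      fun p => ⟨p.1, (terminalOutput? p.2).toList.map Symbol.terminal⟩

variable {g}

lemma mem_dyckify_rules {ρ : ContextFreeRule T (Option (Slot T g.NT))} :
    ρ ∈ (dyckify g).rules ↔ ∃ X ∈ slots g, ∃ r ∈ g.rules, Admits g X r ∧
      ((IsPairRule r ∧ ∃ i ∈ tags g, ∃ j ∈ tags g, ρ = ⟨X, pairOutput r i j⟩) ∨
        (¬ IsPairRule r ∧ ρ = ⟨X, (terminalOutput? r).toList.map Symbol.terminal⟩)) := by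
  simp only [Finset.mem_union, Finset.mem_image, Finset.mem_filter, Finset.mem_product,
    Prod.exists]
  constructor
  · rintro (⟨X, r, i, j, ⟨⟨⟨hX, hr⟩, hi, hj⟩, hadm, hpair⟩, rfl⟩ |
      ⟨X, r, ⟨⟨hX, hr⟩, hadm, hpair⟩, rfl⟩)
    · exact ⟨X, hX, r, hr, hadm, .inl ⟨hpair, i, hi, j, hj, rfl⟩⟩
    · exact ⟨X, hX, r, hr, hadm, .inr ⟨hpair, rfl⟩⟩
  · rintro ⟨X, hX, r, hr, hadm, ⟨hpair, i, hi, j, hj, rfl⟩ | ⟨hpair, rfl⟩⟩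
    · exact .inl ⟨X, r, i, j, ⟨⟨⟨hX, hr⟩, hi, hj⟩, hadm, hpair⟩, rfl⟩
    · exact .inr ⟨X, r, ⟨⟨hX, hr⟩, hadm, hpair⟩, rfl⟩

lemma mem_slots {c : Slot T g.NT} : some c ∈ slots g ↔ c.rule ∈ g.rules ∧ IsPairRule c.rule ∧
    c.leftTag ∈ tags g ∧ c.rightTag ∈ tags g := by
  obtain ⟨r, i, j, b⟩ := c
  simp [slots, and_assoc]

lemma IsChomskyNF.isBinaryNF (hg : IsChomskyNF g) : IsBinaryNF g := by
  intro r hr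
  rcases hg.1 r hr with ⟨B, C, h⟩ | ⟨a, h⟩ | ⟨-, h⟩
  exacts [.inr (.inr (.inr ⟨B, C, h⟩)), .inr (.inl ⟨a, h⟩), .inl h]

lemma IsChomskyNF.output_eq_terminalOutput (hg : IsChomskyNF g) {r : ContextFreeRule T g.NT}
    (hr : r ∈ g.rules) (hpair : ¬ IsPairRule r) :
    r.output = (terminalOutput? r).toList.map Symbol.terminal := by
  rcases hg.1 r hr with h | ⟨a, h⟩ | ⟨-, h⟩
  exacts [absurd h hpair, by simp [terminalOutput?, h], by simp [terminalOutput?, h]]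

lemma IsChomskyNF.input_eq_initial (hg : IsChomskyNF g) {r : ContextFreeRule T g.NT}
    (hr : r ∈ g.rules) (hpair : ¬ IsPairRule r) (hr' : terminalOutput? r = none) :
    r.input = g.initial := by
  rcases hg.1 r hr with h | ⟨a, h⟩ | ⟨h, -⟩
  exacts [absurd h hpair, by simp [terminalOutput?, h] at hr', h]

lemma Slot.child_ne_initial (hg : IsChomskyNF g) {c : Slot T g.NT} (hc : some c ∈ slots g) :
    c.child ≠ g.initial := by
  obtain ⟨r, i, j, b⟩ := c
  obtain ⟨hr, ⟨B, C, hBC⟩, -⟩ := mem_slots.mp hc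
  intro h
  apply hg.2 _ hr
  rw [hBC, ← h, Slot.child_mk hBC]
  split <;> simp

lemma isChomskyNF_dyckify (hg : IsChomskyNF g) : IsChomskyNF (dyckify g) := by
  refine ⟨fun ρ hρ => ?_, fun ρ hρ => ?_⟩
  · obtain ⟨X, hX, r, hr, ⟨hin, -⟩, ⟨-, i, -, j, -, rfl⟩ | ⟨hpair, rfl⟩⟩ :=
      mem_dyckify_rules.mp hρ
    · exact .inl ⟨_, _, rfl⟩
    cases ht : terminalOutput? r with
    | some a => exact .inr (.inl ⟨a, by simp⟩)
    | none =>
      refine .inr (.inr ⟨?_, by simp⟩)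
      rcases X with _ | c
      · rfl
      · exact absurd (hin.symm.trans (hg.input_eq_initial hr hpair ht))
          (Slot.child_ne_initial hg hX)
  · obtain ⟨X, -, r, -, -, ⟨-, i, -, j, -, rfl⟩ | ⟨-, rfl⟩⟩ := mem_dyckify_rules.mp hρ <;>
      simp [pairOutput]

lemma dyckify_pair_members {ρ : ContextFreeRule T (Option (Slot T g.NT))}
    (hρ : ρ ∈ (dyckify g).rules) {X₁ X₂ : Option (Slot T g.NT)}
    (h : ρ.output = [.nonterminal X₁, .nonterminal X₂]) :
    ∃ r i j, X₁ = some ⟨r, i, j, false⟩ ∧ X₂ = some ⟨r, i, j, true⟩ := by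
  obtain ⟨X, -, r, -, -, ⟨-, i, -, j, -, rfl⟩ | ⟨-, rfl⟩⟩ := mem_dyckify_rules.mp hρ
  · simp only [pairOutput, List.cons.injEq, Symbol.nonterminal.injEq, and_true] at h
    exact ⟨r, i, j, h.1.symm, h.2.symm⟩
  · cases ht : terminalOutput? r <;> simp [ht] at h

lemma dyckify_rule_eq_of_tag_eq_some {ρ : ContextFreeRule T (Option (Slot T g.NT))}
    (hρ : ρ ∈ (dyckify g).rules) {c : Slot T g.NT} (hin : ρ.input = some c) {a : T}
    (ha : c.tag = some a) : ρ = ⟨some c, [.terminal a]⟩ := by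
  obtain ⟨X, -, r, -, ⟨-, htag⟩, ⟨⟨B, C, hBC⟩, i, -, j, -, rfl⟩ | ⟨-, rfl⟩⟩ :=
    mem_dyckify_rules.mp hρ <;> obtain rfl : X = some c := hin <;>
    have hr : terminalOutput? r = some a := (htag c rfl).trans ha
  · simp [terminalOutput?, hBC] at hr
  · simp [hr]

lemma dyckify_tag_eq_of_output_eq {ρ : ContextFreeRule T (Option (Slot T g.NT))}
    (hρ : ρ ∈ (dyckify g).rules) {c : Slot T g.NT} (hin : ρ.input = some c) {a : T}
    (hout : ρ.output = [.terminal a]) : c.tag = some a := by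
  obtain ⟨X, -, r, -, ⟨-, htag⟩, ⟨-, i, -, j, -, rfl⟩ | ⟨-, rfl⟩⟩ := mem_dyckify_rules.mp hρ <;>
    obtain rfl : X = some c := hin
  · simp [pairOutput] at hout
  · rw [← htag c rfl]
    cases ht : terminalOutput? r <;> simp_all

lemma isDyckNF_dyckify (hg : IsChomskyNF g) : IsDyckNF (dyckify g) := by
  refine ⟨isChomskyNF_dyckify hg, ?_, ?_, ?_⟩
  · intro ρ hρ a hout hin ρ' hρ' hin'
    obtain ⟨c, hc⟩ := Option.ne_none_iff_exists'.mp hin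
    have htag := dyckify_tag_eq_of_output_eq hρ hc hout
    rw [dyckify_rule_eq_of_tag_eq_some hρ hc htag,
      dyckify_rule_eq_of_tag_eq_some hρ' (hin'.trans hc) htag]
  · intro ρ hρ ρ' hρ' A B B' hout hout'
    obtain ⟨r, i, j, rfl, -⟩ := dyckify_pair_members hρ hout
    obtain ⟨r', i', j', -, h⟩ := dyckify_pair_members hρ' hout'
    simp at h
  · intro ρ hρ ρ' hρ' A A' B B' hout hout'
    obtain ⟨r, i, j, rfl, rfl⟩ := dyckify_pair_members hρ hout
    obtain ⟨r', i', j', rfl, rfl⟩ := dyckify_pair_members hρ' hout'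
    simp +contextual

lemma language_dyckify_le (hg : IsChomskyNF g) : (dyckify g).language ≤ g.language := by
  refine language_le_of_simulation (fun s => [mapSym (origin g) s]) (fun _ => rfl) (.refl _)
    fun ρ hρ => ?_
  obtain ⟨X, -, r, hr, ⟨hin, -⟩, hρ⟩ := mem_dyckify_rules.mp hρ
  obtain ⟨rfl, hout⟩ : ρ.input = X ∧
      ρ.output.flatMap (fun s => [mapSym (origin g) s]) = r.output := by
    rcases hρ with ⟨⟨B, C, hBC⟩, i, -, j, -, rfl⟩ | ⟨hpair, rfl⟩
    · simp [pairOutput, mapSym, origin, Slot.child_mk hBC, hBC]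
    · rw [hg.output_eq_terminalOutput hr hpair]
      simp [mapSym, ← List.map_eq_flatMap]
  rw [hout, mapSym, ← hin]
  exact (produces_of_mem hr).single

/-- The witness `r` is the first rule of the derivation; every slot committed to it replays the
derivation. -/
lemma dyckify_derives_of_derives (hg : IsChomskyNF g) {A : g.NT} {w : List T}
    (h : g.Derives [.nonterminal A] (w.map Symbol.terminal)) :
    ∃ r ∈ g.rules, r.input = A ∧ ∀ X ∈ slots g, Admits g X r →
      (dyckify g).Derives [.nonterminal X] (w.map Symbol.terminal) := by
  have leaf {A : g.NT} {s : List (Symbol T g.NT)} (hr : ⟨A, s⟩ ∈ g.rules)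
      (hs : ¬ IsPairRule ⟨A, s⟩) {X} (hX : X ∈ slots g) (hadm : Admits g X ⟨A, s⟩) :
      (dyckify g).Produces [.nonterminal X]
        ((terminalOutput? ⟨A, s⟩).toList.map Symbol.terminal) :=
    produces_of_mem (mem_dyckify_rules.mpr ⟨X, hX, _, hr, hadm, .inr ⟨hs, rfl⟩⟩)
  refine hg.isBinaryNF.derives_induction (P := fun A w => ∃ r ∈ g.rules, r.input = A ∧
    ∀ X ∈ slots g, Admits g X r → (dyckify g).Derives [.nonterminal X] (w.map Symbol.terminal))
    ?eps ?term ?unit ?pair h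
  case eps =>
    exact fun A hr =>
      ⟨_, hr, rfl, fun X hX hadm => (leaf hr (by simp [IsPairRule]) hX hadm).single⟩
  case term =>
    refine fun A a hr => ⟨_, hr, rfl, fun X hX hadm => ?_⟩
    simpa [terminalOutput?] using (leaf hr (by simp [IsPairRule]) hX hadm).single
  case unit =>
    intro A B w hr
    rcases hg.1 _ hr with ⟨_, _, h⟩ | ⟨_, h⟩ | ⟨-, h⟩ <;> simp at h
  case pair =>
    rintro A B C u v hr - ⟨rB, hrB, rfl, hB⟩ - ⟨rC, hrC, rfl, hC⟩
    refine ⟨_, hr, rfl, fun X hX hadm => ?_⟩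
    set r : ContextFreeRule T g.NT := ⟨A, [.nonterminal rB.input, .nonterminal rC.input]⟩
    have hpair : IsPairRule r := ⟨_, _, rfl⟩
    have hi : terminalOutput? rB ∈ tags g := Finset.mem_image_of_mem _ hrB
    have hj : terminalOutput? rC ∈ tags g := Finset.mem_image_of_mem _ hrC
    have hmem := mem_dyckify_rules.mpr ⟨X, hX, r, hr, hadm, .inl ⟨hpair, _, hi, _, hj, rfl⟩⟩
    have slot (b : Bool) :
        some (⟨r, terminalOutput? rB, terminalOutput? rC, b⟩ : Slot T g.NT) ∈ slots g :=
      mem_slots.mpr ⟨hr, hpair, hi, hj⟩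
    have hchild (b : Bool) := Slot.child_mk (show r.output = _ from rfl)
      (i := terminalOutput? rB) (j := terminalOutput? rC) (b := b)
    simpa [pairOutput] using (produces_of_mem hmem).trans_derives
      ((hB _ (slot false) ⟨by simp [origin, hchild], by simp [Slot.tag]⟩).append₂
        (hC _ (slot true) ⟨by simp [origin, hchild], by simp [Slot.tag]⟩))

lemma language_dyckify (hg : IsChomskyNF g) : (dyckify g).language = g.language := by
  refine le_antisymm (language_dyckify_le hg) fun w hw => ?_
  obtain ⟨r, hr, hin, h⟩ := dyckify_derives_of_derives hg hw
  exact h none (Finset.mem_insert_self _ _) ⟨hin, by simp⟩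

end Dyck

/-- For each context-free grammar `G = (N, T, P, S)` there exists a
context-free grammar `G'` in Dyck normal form with `L(G) = L(G')`. -/
theorem exists_dyckNF (G : ContextFreeGrammar.{0} T) :
    ∃ G' : ContextFreeGrammar.{0} T, IsDyckNF G' ∧ G.language = G'.language := by
  obtain ⟨G₀, hG₀, hlang⟩ := exists_isChomskyNF G
  exact ⟨dyckify G₀, isDyckNF_dyckify hG₀, by rw [language_dyckify hG₀, hlang]⟩

end CS
end

section
/- If G = (N, T, P, S) is a context-free grammar in Chomsky normal form, then there exist a grammar G' = (N', T, P', S) in Dyck normal form with L(G') = L(G) and a map h_d : N' ∪ T → N ∪ T, acting as the identity on T and with h_d(S) = S, such that for every word w ∈ L(G), applying h_d symbol-wise to any leftmost derivation of w in G' yields a leftmost derivation of w in G; consequently every derivation tree of w in G is the image under h_d of a derivation tree of w in G'. -/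
namespace CS

/-! ### Grammars: Chomsky and Dyck normal forms -/

variable {T : Type}

/-!
Every nonterminal of `G'` other than the axiom is one half of a bracket pair `[ₚ`, `]ₚ`, where
`p` records a binary rule `X → BC` of `G` together with a tag for each of `B` and `C`: the tag
`some a` announces that this occurrence will be rewritten by the terminal rule `→ a`, the tag
`none` that it will be rewritten by a binary rule. A half bracket tagged `some a` has the single
rule `→ a`; one tagged `none` (or the axiom) standing for `X` has the rules `→ [ₚ ]ₚ` for every
`p` recording a rule with left side `X`. Sending each half bracket to the nonterminal it stands
for maps rules of `G'` to rules of `G`, hence leftmost derivations to leftmost derivations and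
`L(G') ⊆ L(G)`. Conversely a parse tree of `w` in `G` lifts to `G'` once the tags are read off
its leaves, so `L(G) ⊆ L(G')`. Conditions (2)–(4) hold because the tags separate terminal from
binary rules and because `[ₚ` and `]ₚ` determine each other.
-/

section DyckNormalForm

open ContextFreeGrammar

@[simp] lemma mapSym_terminal {N N' : Type*} (f : N → N') (a : T) :
    mapSym f (Symbol.terminal a : Symbol T N) = Symbol.terminal a := rfl

@[simp] lemma mapSym_nonterminal {N N' : Type*} (f : N → N') (A : N) :
    mapSym f (Symbol.nonterminal A : Symbol T N) = Symbol.nonterminal (f A) := rfl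

lemma produces_of_mem_rules {g : ContextFreeGrammar T} {r : ContextFreeRule T g.NT}
    (hr : r ∈ g.rules) : g.Produces [.nonterminal r.input] r.output :=
  ⟨r, hr, .input_output⟩

def IsGrammarHom (g' g : ContextFreeGrammar T) (f : g'.NT → g.NT) : Prop :=
  ∀ r ∈ g'.rules, (⟨f r.input, r.output.map (mapSym f)⟩ : ContextFreeRule T g.NT) ∈ g.rules

namespace IsGrammarHom

variable {g' g : ContextFreeGrammar T} {f : g'.NT → g.NT} {u v : List (Symbol T g'.NT)}

lemma produces (hf : IsGrammarHom g' g f) (h : g'.Produces u v) :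
    g.Produces (u.map (mapSym f)) (v.map (mapSym f)) := by
  obtain ⟨r, hr, hrw⟩ := h
  obtain ⟨p, q, rfl, rfl⟩ := hrw.exists_parts
  refine ⟨_, hf r hr, ?_⟩
  simpa using ContextFreeRule.rewrites_of_exists_parts _ (p.map (mapSym f)) (q.map (mapSym f))

lemma derives (hf : IsGrammarHom g' g f) (h : g'.Derives u v) :
    g.Derives (u.map (mapSym f)) (v.map (mapSym f)) := by
  induction h with
  | refl => rfl
  | tail _ huv ih => exact ih.trans_produces (hf.produces huv)

lemma language_le (hf : IsGrammarHom g' g f) (hS : f g'.initial = g.initial) :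
    g'.language ≤ g.language := fun w hw =>
  (mem_language_iff g w).2 (by simpa [hS, Function.comp_def] using hf.derives hw)

lemma leftmostProduces (hf : IsGrammarHom g' g f) (h : LeftmostProduces g' u v) :
    LeftmostProduces g (u.map (mapSym f)) (v.map (mapSym f)) := by
  obtain ⟨_, r, hr, rfl, p, s, rfl, rfl⟩ := h
  exact ⟨f r.input, _, hf r hr, rfl, p, s.map (mapSym f), by simp, by simp⟩

end IsGrammarHom

variable (g : ContextFreeGrammar T)

inductive Parse : g.NT → List T → Prop
  | terminal {A : g.NT} {a : T} (h : ⟨A, [.terminal a]⟩ ∈ g.rules) : Parse A [a]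
  | empty (h : ⟨g.initial, []⟩ ∈ g.rules) : Parse g.initial []
  | binary {A B C : g.NT} {u v : List T}
      (h : ⟨A, [.nonterminal B, .nonterminal C]⟩ ∈ g.rules) (hu : Parse B u) (hv : Parse C v) :
      Parse A (u ++ v)

inductive Yields : List (Symbol T g.NT) → List T → Prop
  | nil : Yields [] []
  | terminal (a : T) {u : List (Symbol T g.NT)} {w : List T} (h : Yields u w) :
      Yields (.terminal a :: u) (a :: w)
  | nonterminal {A : g.NT} {u : List (Symbol T g.NT)} {w₁ w₂ : List T} (hA : Parse g A w₁)
      (hu : Yields u w₂) : Yields (.nonterminal A :: u) (w₁ ++ w₂)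

variable {g}

lemma yields_map_terminal (w : List T) : Yields g (w.map Symbol.terminal) w := by
  induction w with
  | nil => exact .nil
  | cons a w ih => exact .terminal a ih

lemma yields_append_iff {u v : List (Symbol T g.NT)} {w : List T} :
    Yields g (u ++ v) w ↔ ∃ w₁ w₂, w = w₁ ++ w₂ ∧ Yields g u w₁ ∧ Yields g v w₂ := by
  induction u generalizing w with
  | nil => exact ⟨fun h => ⟨[], w, rfl, .nil, h⟩, by rintro ⟨_, _, rfl, ⟨⟩, h⟩; exact h⟩
  | cons s u ih =>
    constructor
    · intro h
      cases h with
      | terminal a h =>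
        obtain ⟨w₁, w₂, rfl, h₁, h₂⟩ := ih.1 h
        exact ⟨a :: w₁, w₂, rfl, .terminal a h₁, h₂⟩
      | nonterminal hA h =>
        obtain ⟨w₁, w₂, rfl, h₁, h₂⟩ := ih.1 h
        exact ⟨_, w₂, (List.append_assoc ..).symm, .nonterminal hA h₁, h₂⟩
    · rintro ⟨_, w₂, rfl, h₁, h₂⟩
      cases h₁ with
      | terminal a h₁ => exact .terminal a (ih.2 ⟨_, w₂, rfl, h₁, h₂⟩)
      | nonterminal hA h₁ =>
        rw [List.append_assoc]
        exact .nonterminal hA (ih.2 ⟨_, w₂, rfl, h₁, h₂⟩)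

lemma yields_singleton_iff {A : g.NT} {w : List T} :
    Yields g [.nonterminal A] w ↔ Parse g A w := by
  refine ⟨fun h => ?_, fun h => by simpa using Yields.nonterminal h .nil⟩
  cases h with
  | nonterminal hA h => cases h; simpa using hA

lemma IsChomskyNF.ne_initial_of_mem_rules (hg : IsChomskyNF g) {A B C : g.NT}
    (hr : ⟨A, [.nonterminal B, .nonterminal C]⟩ ∈ g.rules) :
    B ≠ g.initial ∧ C ≠ g.initial := by
  constructor <;> rintro rfl <;> exact hg.2 _ hr (by simp)

lemma IsChomskyNF.parse_of_yields_output (hg : IsChomskyNF g) {r : ContextFreeRule T g.NT}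
    (hr : r ∈ g.rules) {w : List T} (h : Yields g r.output w) : Parse g r.input w := by
  obtain ⟨X, α⟩ := r
  rcases hg.1 _ hr with ⟨B, C, rfl⟩ | ⟨a, rfl⟩ | ⟨rfl, rfl⟩
  · rcases h with _ | _ | ⟨hB, _ | _ | ⟨hC, ⟨⟩⟩⟩
    simpa using Parse.binary hr hB hC
  · rcases h with _ | ⟨_, ⟨⟩⟩
    exact .terminal hr
  · cases h
    exact .empty hr

lemma IsChomskyNF.yields_of_derives (hg : IsChomskyNF g) {u : List (Symbol T g.NT)} {w : List T}
    (h : g.Derives u (w.map Symbol.terminal)) : Yields g u w := by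
  induction h using Relation.ReflTransGen.head_induction_on with
  | refl => exact yields_map_terminal w
  | head huv _ ih =>
    obtain ⟨r, hr, hrw⟩ := huv
    obtain ⟨p, q, rfl, rfl⟩ := hrw.exists_parts
    obtain ⟨_, w₃, rfl, h₁₂, h₃⟩ := yields_append_iff.1 ih
    obtain ⟨w₁, w₂, rfl, h₁, h₂⟩ := yields_append_iff.1 h₁₂
    exact yields_append_iff.2 ⟨_, w₃, rfl, yields_append_iff.2
      ⟨w₁, w₂, rfl, h₁, yields_singleton_iff.2 (hg.parse_of_yields_output hr h₂)⟩, h₃⟩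

lemma IsChomskyNF.parse_of_mem_language (hg : IsChomskyNF g) {w : List T} (hw : w ∈ g.language) :
    Parse g g.initial w :=
  yields_singleton_iff.1 (hg.yields_of_derives hw)

lemma Parse.ne_nil (hg : IsChomskyNF g) {A : g.NT} {w : List T} (h : Parse g A w)
    (hA : A ≠ g.initial) : w ≠ [] := by
  induction h with
  | terminal => simp
  | empty => exact absurd rfl hA
  | binary hr _ _ ihu =>
    exact List.append_ne_nil_of_left_ne_nil (ihu (hg.ne_initial_of_mem_rules hr).1) _

def tagOf : List T → Option T
  | [a] => some a
  | _ => none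

lemma tagOf_append {u v : List T} (hu : u ≠ []) (hv : v ≠ []) : tagOf (u ++ v) = none := by
  match u, v, hu, hv with
  | [_], _ :: _, _, _ => rfl
  | _ :: _ :: _, _ :: _, _, _ => rfl

lemma Parse.tagOf_append_eq_none (hg : IsChomskyNF g) {A B C : g.NT} {u v : List T}
    (hr : ⟨A, [.nonterminal B, .nonterminal C]⟩ ∈ g.rules) (hu : Parse g B u) (hv : Parse g C v) :
    tagOf (u ++ v) = none :=
  tagOf_append (hu.ne_nil hg (hg.ne_initial_of_mem_rules hr).1)
    (hv.ne_nil hg (hg.ne_initial_of_mem_rules hr).2)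

variable (g)

def IsTag (A : g.NT) : Option T → Prop
  | none => True
  | some a => ⟨A, [.terminal a]⟩ ∈ g.rules

structure TaggedPair (N T : Type*) where
  top : N
  left : N
  right : N
  leftTag : Option T
  rightTag : Option T

def TaggedPair.IsValid (p : TaggedPair g.NT T) : Prop :=
  ⟨p.top, [.nonterminal p.left, .nonterminal p.right]⟩ ∈ g.rules ∧
    IsTag g p.left p.leftTag ∧ IsTag g p.right p.rightTag

/-- `none` is the axiom; `some (p, true)` and `some (p, false)` are the brackets `[ₚ` and `]ₚ`. -/
abbrev DyckNT : Type _ := Option (TaggedPair g.NT T × Bool)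

def dyckHom : DyckNT g → g.NT
  | none => g.initial
  | some (p, true) => p.left
  | some (p, false) => p.right

def dyckTag : DyckNT g → Option T
  | none => none
  | some (p, true) => p.leftTag
  | some (p, false) => p.rightTag

def IsValidDyckNT : DyckNT g → Prop
  | none => True
  | some (p, _) => p.IsValid g

-- The hypotheses `hX` serve only to keep the set of rules finite.
inductive DyckRule : ContextFreeRule T (DyckNT g) → Prop
  | pair {X : DyckNT g} {p : TaggedPair g.NT T} (hX : IsValidDyckNT g X)
      (htag : dyckTag g X = none) (hp : p.IsValid g) (htop : dyckHom g X = p.top) :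
      DyckRule ⟨X, [.nonterminal (some (p, true)), .nonterminal (some (p, false))]⟩
  | terminal {X : DyckNT g} {a : T} (hX : IsValidDyckNT g X)
      (htag : X = none ∨ dyckTag g X = some a) (ha : ⟨dyckHom g X, [.terminal a]⟩ ∈ g.rules) :
      DyckRule ⟨X, [.terminal a]⟩
  | empty (h : ⟨g.initial, []⟩ ∈ g.rules) : DyckRule ⟨none, []⟩

lemma finite_setOf_mem_terminalRule :
    {a : T | ∃ A, (⟨A, [.terminal a]⟩ : ContextFreeRule T g.NT) ∈ g.rules}.Finite := by
  refine ((g.rules.finite_toSet.preimage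
    (f := fun x : g.NT × T => ⟨x.1, [.terminal x.2]⟩) ?_).image Prod.snd).subset ?_
  · rintro ⟨A, a⟩ - ⟨B, b⟩ - h
    simp_all
  · rintro a ⟨A, hA⟩
    exact ⟨(A, a), hA, rfl⟩

lemma finite_setOf_isTag : {c : Option T | ∃ A, IsTag g A c}.Finite := by
  refine (((finite_setOf_mem_terminalRule g).image some).insert none).subset ?_
  rintro (_ | a) ⟨A, hA⟩
  · exact .inl rfl
  · exact .inr ⟨a, ⟨A, hA⟩, rfl⟩

lemma finite_setOf_isValid : {p : TaggedPair g.NT T | p.IsValid g}.Finite := by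
  refine ((g.rules.finite_toSet.prod ((finite_setOf_isTag g).prod (finite_setOf_isTag g))).preimage
    (f := fun p : TaggedPair g.NT T =>
      ((⟨p.top, [.nonterminal p.left, .nonterminal p.right]⟩ : ContextFreeRule T g.NT),
        p.leftTag, p.rightTag)) ?_).subset ?_
  · rintro ⟨⟩ - ⟨⟩ - h
    simp_all
  · rintro p ⟨hp, hl, hr⟩
    exact ⟨hp, ⟨_, hl⟩, ⟨_, hr⟩⟩

lemma finite_setOf_isValidDyckNT : {X | IsValidDyckNT g X}.Finite := by
  refine ((((finite_setOf_isValid g).prod Set.finite_univ).image some).insert none).subset ?_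
  rintro (_ | ⟨p, s⟩) hX
  · exact .inl rfl
  · exact .inr ⟨(p, s), ⟨hX, trivial⟩, rfl⟩

lemma finite_setOf_dyckRule : {r | DyckRule g r}.Finite := by
  refine ((((finite_setOf_isValidDyckNT g).prod (finite_setOf_isValid g)).image
      fun x : DyckNT g × TaggedPair g.NT T =>
        (⟨x.1, [.nonterminal (some (x.2, true)), .nonterminal (some (x.2, false))]⟩ :
          ContextFreeRule T (DyckNT g))).union
    ((((finite_setOf_isValidDyckNT g).prod (finite_setOf_mem_terminalRule g)).image
      fun x : DyckNT g × T => (⟨x.1, [.terminal x.2]⟩ : ContextFreeRule T (DyckNT g))).insert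
        ⟨none, []⟩)).subset ?_
  rintro _ (⟨hX, -, hp, -⟩ | ⟨hX, -, ha⟩ | -)
  · exact .inl ⟨(_, _), ⟨hX, hp⟩, rfl⟩
  · exact .inr (.inr ⟨(_, _), ⟨hX, _, ha⟩, rfl⟩)
  · exact .inr (.inl rfl)

noncomputable abbrev dyckGrammar : ContextFreeGrammar T :=
  ⟨DyckNT g, none, (finite_setOf_dyckRule g).toFinset⟩

variable {g}

lemma mem_dyckGrammar_rules {r : ContextFreeRule T (DyckNT g)} :
    r ∈ (dyckGrammar g).rules ↔ DyckRule g r :=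
  Set.Finite.mem_toFinset _

lemma isGrammarHom_dyckHom : IsGrammarHom (dyckGrammar g) g (dyckHom g) := by
  intro r hr
  cases mem_dyckGrammar_rules.1 hr with
  | pair _ _ hp htop => exact htop ▸ hp.1
  | terminal _ _ ha => simpa using ha
  | empty h => simpa [dyckHom] using h

lemma Parse.isTag_tagOf (hg : IsChomskyNF g) {A : g.NT} {w : List T} (h : Parse g A w) :
    IsTag g A (tagOf w) := by
  cases h with
  | terminal hr => exact hr
  | empty => trivial
  | binary hr hu hv => rw [Parse.tagOf_append_eq_none hg hr hu hv]; trivial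

lemma IsValidDyckNT.eq_none_of_dyckHom_eq_initial (hg : IsChomskyNF g) {X : DyckNT g}
    (hX : IsValidDyckNT g X) (hS : dyckHom g X = g.initial) : X = none := by
  rcases X with _ | ⟨p, _ | _⟩
  · rfl
  · exact absurd hS (hg.ne_initial_of_mem_rules hX.1).2
  · exact absurd hS (hg.ne_initial_of_mem_rules hX.1).1

lemma Parse.derives_dyckGrammar (hg : IsChomskyNF g) {A : g.NT} {w : List T} (h : Parse g A w)
    {X : DyckNT g} (hX : IsValidDyckNT g X) (hXA : dyckHom g X = A)
    (htag : X = none ∨ dyckTag g X = tagOf w) :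
    (dyckGrammar g).Derives [.nonterminal X] (w.map .terminal) := by
  induction h generalizing X with
  | terminal hA =>
    exact (produces_of_mem_rules (mem_dyckGrammar_rules.2 (.terminal hX htag (hXA ▸ hA)))).single
  | empty hS =>
    obtain rfl := hX.eq_none_of_dyckHom_eq_initial hg hXA
    exact (produces_of_mem_rules (mem_dyckGrammar_rules.2 (.empty hS))).single
  | @binary A B C u v hA hu hv ihu ihv =>
    let p : TaggedPair g.NT T := ⟨A, B, C, tagOf u, tagOf v⟩
    have hp : p.IsValid g := ⟨hA, hu.isTag_tagOf hg, hv.isTag_tagOf hg⟩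
    have hXtag : dyckTag g X = none := by
      rcases htag with rfl | htag
      · rfl
      · rw [htag, Parse.tagOf_append_eq_none hg hA hu hv]
    have hL := ihu (X := some (p, true)) hp rfl (.inr rfl)
    have hR := ihv (X := some (p, false)) hp rfl (.inr rfl)
    refine (produces_of_mem_rules (mem_dyckGrammar_rules.2 (.pair hX hXtag hp hXA))).trans_derives ?_
    rw [List.map_append, ← List.singleton_append]
    exact (hL.append_right _).trans (hR.append_left _)

lemma dyckGrammar_language (hg : IsChomskyNF g) : (dyckGrammar g).language = g.language :=
  (isGrammarHom_dyckHom.language_le rfl).antisymm fun _ hw =>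
    (hg.parse_of_mem_language hw).derives_dyckGrammar hg trivial rfl (.inl rfl)

lemma DyckRule.eq_of_input_eq {X : DyckNT g} {a : T} (ha : DyckRule g ⟨X, [.terminal a]⟩)
    (hX : X ≠ none) {r : ContextFreeRule T (DyckNT g)} (hr : DyckRule g r) (hin : r.input = X) :
    r = ⟨X, [.terminal a]⟩ := by
  cases ha with
  | terminal _ htag =>
    replace htag := htag.resolve_left hX
    cases hr <;> simp_all

lemma DyckRule.eq_brackets_of_output_eq {r : ContextFreeRule T (DyckNT g)} (hr : DyckRule g r)
    {A B : DyckNT g} (h : r.output = [.nonterminal A, .nonterminal B]) :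
    ∃ p, A = some (p, true) ∧ B = some (p, false) := by
  cases hr with
  | pair =>
    simp only [List.cons.injEq, Symbol.nonterminal.injEq, and_true] at h
    exact ⟨_, h.1.symm, h.2.symm⟩
  | terminal => simp at h
  | empty => simp at h

lemma dyckGrammar_isChomskyNF : IsChomskyNF (dyckGrammar g) := by
  refine ⟨fun r hr => ?_, fun r hr => ?_⟩ <;> cases mem_dyckGrammar_rules.1 hr
  · exact .inl ⟨_, _, rfl⟩
  · exact .inr (.inl ⟨_, rfl⟩)
  · exact .inr (.inr ⟨rfl, rfl⟩)
  all_goals simp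

lemma dyckGrammar_isDyckNF : IsDyckNF (dyckGrammar g) := by
  refine ⟨dyckGrammar_isChomskyNF, fun ⟨X, α⟩ hr a hα hX r' hr' hin => ?_,
    fun r hr r' hr' A B B' h h' => ?_, fun r hr r' hr' A A' B B' h h' => ?_⟩
  · obtain rfl : α = [.terminal a] := hα
    exact (mem_dyckGrammar_rules.1 hr).eq_of_input_eq hX (mem_dyckGrammar_rules.1 hr') hin
  · obtain ⟨p, rfl, -⟩ := (mem_dyckGrammar_rules.1 hr).eq_brackets_of_output_eq h
    obtain ⟨p', -, h'⟩ := (mem_dyckGrammar_rules.1 hr').eq_brackets_of_output_eq h'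
    simp at h'
  · obtain ⟨p, rfl, rfl⟩ := (mem_dyckGrammar_rules.1 hr).eq_brackets_of_output_eq h
    obtain ⟨p', rfl, rfl⟩ := (mem_dyckGrammar_rules.1 hr').eq_brackets_of_output_eq h'
    simp

end DyckNormalForm

/-- For every grammar `G` in Chomsky normal form there are a grammar `G'` in
Dyck normal form with `L(G') = L(G)` and a map `h_d` (identity on terminals, axiom to
axiom) such that applying `h_d` symbol-wise to any leftmost derivation in `G'` yields a
leftmost derivation in `G`. -/
theorem exists_dyckNF_leftmost_hom (g : ContextFreeGrammar.{0} T) (hg : IsChomskyNF g) :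
    ∃ (g' : ContextFreeGrammar.{0} T) (h_d : g'.NT → g.NT),
      IsDyckNF g' ∧ g'.language = g.language ∧ h_d g'.initial = g.initial ∧
      ∀ D : List (List (Symbol T g'.NT)), D.Chain' (LeftmostProduces g') →
        (D.map (List.map (mapSym h_d))).Chain' (LeftmostProduces g) :=
  ⟨dyckGrammar g, dyckHom g, dyckGrammar_isDyckNF, dyckGrammar_language hg, rfl, fun _ hD =>
    List.isChain_map_of_isChain _ (fun _ _ h => isGrammarHom_dyckHom.leftmostProduces h) hD⟩

end CS
end

section
/- Let G = (N_k, T, P_k, S) be a context-free grammar in Dyck normal form with N_k = {S, [_1, ..., [_k, ]_1, ..., ]_k} (so |N_k| = 2k + 1). Then the trace-language 𝓛(G) associated with G is a subset of the Dyck language D_k. -/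
namespace CS

/-! ### Grammars: Chomsky and Dyck normal forms -/

variable {T : Type}

/-! ### Auxiliary machinery for Statement 7 -/

/-- The trace of deriving a single bracket nonterminal to a terminal string:
either it is rewritten by a terminal rule (trace `[c]`), or it is expanded to a pair
`[ⱼ ]ⱼ` whose members are then derived. -/
inductive UnitTrace {k : ℕ} : Bracket k → List (Bracket k) → Prop
  | term (c : Bracket k) : UnitTrace c [c]
  | expand (c : Bracket k) (j : Fin k) {x y : List (Bracket k)}
      (hx : UnitTrace (j, true) x) (hy : UnitTrace (j, false) y) :
      UnitTrace c (c :: (x ++ y))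

/-- The trace of deriving a stack of bracket nonterminals to a terminal string. -/
inductive StackTrace {k : ℕ} : List (Bracket k) → List (Bracket k) → Prop
  | nil : StackTrace [] []
  | cons {c : Bracket k} {st x y : List (Bracket k)}
      (hx : UnitTrace c x) (hy : StackTrace st y) : StackTrace (c :: st) (x ++ y)

lemma UnitTrace.one_le_length {k : ℕ} {c : Bracket k} {l : List (Bracket k)}
    (h : UnitTrace c l) : 1 ≤ l.length := by
  cases h <;> simp

lemma unitTrace_dyck_aux {k : ℕ} : ∀ n : ℕ, ∀ (i : Fin k) (x y : List (Bracket k)),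
    x.length + y.length ≤ n → UnitTrace (i, true) x → UnitTrace (i, false) y →
    IsDyck (x ++ y) := by
  intro n
  induction n with
  | zero =>
    intro i x y h hx _
    have := hx.one_le_length
    omega
  | succ n ih =>
    intro i x y h hx hy
    have hxlen := hx.one_le_length
    have hylen := hy.one_le_length
    have hy' : y = [((i : Fin k), false)] ∨
        ∃ y', y = (i, false) :: y' ∧ IsDyck y' := by
      cases hy with
      | term => left; rfl
      | expand _ j hx1 hy1 =>
        right
        refine ⟨_, rfl, ?_⟩
        have h1 := hx1.one_le_length
        have h2 := hy1.one_le_length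
        have : x.length + ((i, false) :: (_ ++ _) : List (Bracket k)).length ≤ n + 1 := h
        simp at this
        exact ih j _ _ (by omega) hx1 hy1
    have hx' : x = [((i : Fin k), true)] ∨
        ∃ x', x = (i, true) :: x' ∧ IsDyck x' := by
      cases hx with
      | term => left; rfl
      | expand _ j hx1 hy1 =>
        right
        refine ⟨_, rfl, ?_⟩
        have h1 := hx1.one_le_length
        have h2 := hy1.one_le_length
        have : (((i, true) :: (_ ++ _)) : List (Bracket k)).length + y.length ≤ n + 1 := h
        simp at this
        exact ih j _ _ (by omega) hx1 hy1
    rcases hx' with rfl | ⟨x', rfl, hdx⟩ <;> rcases hy' with rfl | ⟨y', rfl, hdy⟩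
    · exact IsDyck.pair i
    · have : ([((i : Fin k), true)] ++ (i, false) :: y') =
          [((i : Fin k), true), (i, false)] ++ y' := by simp
      rw [this]
      exact IsDyck.concat (IsDyck.pair i) hdy
    · have : (((i : Fin k), true) :: x' ++ [(i, false)]) =
          ((i, true) :: x' ++ [(i, false)]) := rfl
      exact IsDyck.wrap i hdx
    · have : (((i : Fin k), true) :: x' ++ (i, false) :: y') =
          ((i, true) :: x' ++ [(i, false)]) ++ y' := by simp
      rw [this]
      exact IsDyck.concat (IsDyck.wrap i hdx) hdy

lemma unitTrace_dyck {k : ℕ} {i : Fin k} {x y : List (Bracket k)}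
    (hx : UnitTrace (i, true) x) (hy : UnitTrace (i, false) y) : IsDyck (x ++ y) :=
  unitTrace_dyck_aux (x.length + y.length) i x y le_rfl hx hy

/-- Inversion of a leftmost-trace derivation at its first step. -/
lemma lmTrace_inv {g : ContextFreeGrammar T} {u w : List (Symbol T g.NT)} {l : List g.NT}
    (h : LmTrace g u w l) :
    (l = [] ∧ u = w) ∨
    ∃ (A : g.NT) (l' : List g.NT) (v : List (Symbol T g.NT)),
      l = A :: l' ∧ LeftmostStep g u v A ∧ LmTrace g v w l' := by
  induction h with
  | refl => exact Or.inl ⟨rfl, rfl⟩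
  | tail huv hvw ih =>
    rcases ih with ⟨rfl, rfl⟩ | ⟨B, l', y, rfl, hstep, htr⟩
    · exact Or.inr ⟨_, [], _, rfl, hvw, LmTrace.refl _⟩
    · exact Or.inr ⟨B, _, y, rfl, hstep, LmTrace.tail htr hvw⟩

lemma terminal_prefix_eq {N : Type} :
    ∀ (p q : List T) (A B : N) (s t : List (Symbol T N)),
    p.map Symbol.terminal ++ Symbol.nonterminal A :: s =
      q.map Symbol.terminal ++ Symbol.nonterminal B :: t →
    p = q ∧ A = B ∧ s = t := by
  intro p
  induction p with
  | nil =>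
    intro q A B s t h
    cases q with
    | nil => simp_all
    | cons a q => simp at h
  | cons a p ih =>
    intro q A B s t h
    cases q with
    | nil => simp at h
    | cons b q =>
      simp only [List.map_cons, List.cons_append, List.cons.injEq] at h
      obtain ⟨h1, h2⟩ := h
      obtain ⟨rfl, rfl, rfl⟩ := ih q A B s t h2
      cases h1
      exact ⟨rfl, rfl, rfl⟩

lemma stack_trace_lemma {k : ℕ} {rs : Finset (ContextFreeRule T (Option (Bracket k)))}
    (hpairs : ∀ r ∈ rs,
      (∃ i : Fin k, r.output =
        [Symbol.nonterminal (some (i, true)), Symbol.nonterminal (some (i, false))]) ∨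
      (∃ a : T, r.output = [Symbol.terminal a]) ∨
      (r.input = none ∧ r.output = [])) :
    ∀ (n : ℕ) (l : List (Option (Bracket k))) (p : List T) (st : List (Bracket k))
      (w : List T), l.length ≤ n →
    LmTrace (bracketGrammar k rs)
      (p.map Symbol.terminal ++
        st.map (fun c => (Symbol.nonterminal (some c) : Symbol T (Option (Bracket k)))))
      (w.map Symbol.terminal) l →
    ∃ l' : List (Bracket k), l = l'.map some ∧ StackTrace st l' := by
  intro n
  induction n with
  | zero =>
    intro l p st w hlen h
    have hl : l = [] := List.length_eq_zero_iff.mp (Nat.le_zero.mp hlen)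
    subst hl
    rcases lmTrace_inv h with ⟨-, heq⟩ | ⟨A, l', v, habs, -⟩
    · cases st with
      | nil => exact ⟨[], rfl, StackTrace.nil⟩
      | cons c st' =>
        exfalso
        have hmem : (Symbol.nonterminal (some c) : Symbol T (Option (Bracket k))) ∈ w.map Symbol.terminal := by
          rw [← heq]; simp
        simp at hmem
    · simp at habs
  | succ n ih =>
    intro l p st w hlen h
    rcases lmTrace_inv h with ⟨rfl, heq⟩ | ⟨A, l', v, rfl, hstep, htr⟩
    · cases st with
      | nil => exact ⟨[], rfl, StackTrace.nil⟩
      | cons c st' =>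
        exfalso
        have hmem : (Symbol.nonterminal (some c) : Symbol T (Option (Bracket k))) ∈ w.map Symbol.terminal := by
          rw [← heq]; simp
        simp at hmem
    · obtain ⟨r, hr, hrin, q, s, hu, hv⟩ := hstep
      cases st with
      | nil =>
        exfalso
        have hmem : Symbol.nonterminal A ∈
            (p.map Symbol.terminal : List (Symbol T (Option (Bracket k)))) := by
          have : Symbol.nonterminal A ∈
              q.map Symbol.terminal ++ Symbol.nonterminal A :: s := by simp
          rw [← hu] at this
          simpa using this
        simp at hmem
      | cons c st' =>
        simp only [List.map_cons] at hu
        obtain ⟨rfl, rfl, rfl⟩ := terminal_prefix_eq p q (some c) A _ s hu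
        rcases hpairs r hr with ⟨j, hout⟩ | ⟨a, hout⟩ | ⟨hnone, -⟩
        · -- pair rule
          have hv' : v = p.map Symbol.terminal ++
              ((j, true) :: (j, false) :: st').map
                (fun c => (Symbol.nonterminal (some c) : Symbol T (Option (Bracket k)))) := by
            rw [hv, hout]; simp
          have hlen' : l'.length ≤ n := by
            simp at hlen; omega
          obtain ⟨m, rfl, hm⟩ := ih l' p ((j, true) :: (j, false) :: st') w hlen' (hv' ▸ htr)
          cases hm with
          | cons hx hrest =>
            rename_i x y2
            cases hrest with
            | cons hy hz =>
              rename_i y z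
              refine ⟨(c :: (x ++ y)) ++ z, ?_, StackTrace.cons (UnitTrace.expand c j hx hy) hz⟩
              simp [List.append_assoc]
        · -- terminal rule
          have hv' : v = (p ++ [a]).map Symbol.terminal ++
              st'.map (fun c => (Symbol.nonterminal (some c) : Symbol T (Option (Bracket k)))) := by
            rw [hv, hout]; simp
          have hlen' : l'.length ≤ n := by
            simp at hlen; omega
          obtain ⟨m, rfl, hm⟩ := ih l' (p ++ [a]) st' w hlen' (hv' ▸ htr)
          refine ⟨c :: m, ?_, ?_⟩
          · simp
          · exact StackTrace.cons (UnitTrace.term c) hm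
        · -- λ rule: impossible, input is `some c`
          rw [hrin] at hnone
          simp at hnone

/-- Let `G = (N_k, T, P_k, S)` be a grammar in Dyck normal form with
`N_k = {S, [₁, …, [ₖ, ]₁, …, ]ₖ}` (each two-nonterminal rule having the form `X → [ᵢ ]ᵢ`).
Then every trace-word of `G` is a Dyck word, i.e. the trace-language `𝓛(G)` is a subset of
the Dyck language `D_k`. -/
theorem traceWord_mem_dyck {k : ℕ} (rs : Finset (ContextFreeRule T (Option (Bracket k))))
    (hg : IsDyckNF (bracketGrammar k rs))
    (hpairs : ∀ r ∈ rs,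
      (∃ i : Fin k, r.output =
        [Symbol.nonterminal (some (i, true)), Symbol.nonterminal (some (i, false))]) ∨
      (∃ a : T, r.output = [Symbol.terminal a]) ∨
      (r.input = none ∧ r.output = []))
    (w : List T) (t : List (Option (Bracket k)))
    (ht : IsTraceWord (bracketGrammar k rs) w t) :
    ∃ t' : List (Bracket k), t = t'.map some ∧ IsDyck t' := by
  obtain ⟨htne, htr⟩ := ht
  rcases lmTrace_inv htr with ⟨habs, -⟩ | ⟨A, l', v, hcons, hstep, htr'⟩
  · simp at habs
  · obtain ⟨rfl, rfl⟩ : A = none ∧ l' = t := by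
      injection hcons with h1 h2; exact ⟨h1.symm, h2.symm⟩
    obtain ⟨r, hr, hrin, q, s, hu, hv⟩ := hstep
    have hq : q = [] ∧ s = [] := by
      cases q with
      | nil => simpa using hu.symm
      | cons b q' => simp at hu
    obtain ⟨rfl, rfl⟩ := hq
    simp only [List.map_nil, List.nil_append, List.append_nil] at hv
    rcases hpairs r hr with ⟨j, hout⟩ | ⟨a, hout⟩ | ⟨-, hout⟩
    · -- first rule is a pair rule
      subst hv
      rw [hout] at htr'
      have htr'' : LmTrace (bracketGrammar k rs)
          (([] : List T).map Symbol.terminal ++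
            ([(j, true), (j, false)] : List (Bracket k)).map
              (fun c => (Symbol.nonterminal (some c) : Symbol T (Option (Bracket k)))))
          (w.map Symbol.terminal) l' := by simpa using htr'
      obtain ⟨t', rfl, hst⟩ :=
        stack_trace_lemma hpairs l'.length l' [] [(j, true), (j, false)] w le_rfl htr''
      cases hst with
      | cons hx hrest =>
        rename_i x y2
        cases hrest with
        | cons hy hz =>
          rename_i y z
          cases hz
          refine ⟨x ++ (y ++ []), rfl, ?_⟩
          rw [List.append_nil]
          exact unitTrace_dyck hx hy
    · -- first rule is a terminal rule: derivation ends, contradicting t ≠ []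
      exfalso
      subst hv
      rw [hout] at htr'
      rcases lmTrace_inv htr' with ⟨rfl, -⟩ | ⟨B, m, v', -, hstep', -⟩
      · exact htne rfl
      · obtain ⟨r', -, -, q', s', hu', -⟩ := hstep'
        cases q' with
        | nil => simp at hu'
        | cons b q'' =>
          simp only [List.map_cons, List.cons_append, List.cons.injEq] at hu'
          rcases hu' with ⟨-, hu''⟩
          simp at hu''
    · -- first rule is the λ rule: derivation ends, contradicting t ≠ []
      exfalso
      subst hv
      rw [hout] at htr'
      rcases lmTrace_inv htr' with ⟨rfl, -⟩ | ⟨B, m, v', -, hstep', -⟩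
      · exact htne rfl
      · obtain ⟨r', -, -, q', s', hu', -⟩ := hstep'
        simp at hu'

end CS
end

section
/- Let G_k = (N_k, T, P_k, S) be a context-free grammar in Dyck normal form, let w ∈ L(G_k), let D be a leftmost derivation of w, and let t_{w,D} be the trace-word of w associated with D. If [_i is a bracket such that the pair [_i, ]_i belongs to N^(1) ∪ N^(2)_l (i.e., φ([_i) ∈ T), then every occurrence of [_i in t_{w,D} is immediately followed by its pairwise bracket ]_i. -/
namespace CS

/-! ### Grammars: Chomsky and Dyck normal forms -/

variable {T : Type}

/-!
Let `X → A B` be a rule of a grammar in Dyck normal form. Then in every sentential form derived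
from `S` each occurrence of `A` is immediately followed by `B`: no rule produces `A` as a right
member, and a rule producing `A` as a left member produces `B` next to it. If moreover `A → a`,
then this is the only rule for `A`, so rewriting `A` in a leftmost derivation makes that `B` the
leftmost nonterminal, and `B` is the next nonterminal rewritten.
-/

section FollowedBy

variable {α : Type*} (a b : α)

def FollowedBy (l : List α) : Prop :=
  ∀ i : ℕ, l[i]? = some a → l[i + 1]? = some b

variable {a b}

@[simp]
theorem followedBy_nil : FollowedBy a b [] := by
  simp [FollowedBy]

@[simp]
theorem followedBy_cons {x : α} {l : List α} :
    FollowedBy a b (x :: l) ↔ (x = a → l.head? = some b) ∧ FollowedBy a b l := by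
  refine ⟨fun h => ⟨fun hx => ?_, fun i hi => h (i + 1) hi⟩, ?_⟩
  · simpa [List.head?_eq_getElem?] using h 0 (by simp [hx])
  · rintro ⟨hx, hl⟩ (_ | i) hi
    · simpa [List.head?_eq_getElem?] using hx (by simpa using hi)
    · exact hl i hi

theorem followedBy_append {x l : List α} (hx : a ∉ x) (hl : FollowedBy a b l) :
    FollowedBy a b (x ++ l) := by
  induction x with
  | nil => exact hl
  | cons y x ih =>
    simp only [List.mem_cons, not_or] at hx
    exact followedBy_cons.2 ⟨fun hy => absurd hy.symm hx.1, ih hx.2⟩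

theorem FollowedBy.of_append {x l : List α} (h : FollowedBy a b (x ++ l)) : FollowedBy a b l := by
  induction x with
  | nil => exact h
  | cons y x ih => exact ih (followedBy_cons.1 h).2

end FollowedBy

variable {g : ContextFreeGrammar T}

namespace LmTrace

theorem eq_of_nil {u v : List (Symbol T g.NT)} (h : LmTrace g u v []) : u = v := by
  generalize hl : ([] : List g.NT) = l at h
  cases h with
  | refl => rfl
  | tail => simp at hl

theorem exists_of_snoc {u w : List (Symbol T g.NT)} {l : List g.NT} {C : g.NT}
    (h : LmTrace g u w (l ++ [C])) : ∃ v, LmTrace g u v l ∧ LeftmostStep g v w C := by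
  generalize hl : l ++ [C] = l' at h
  cases h with
  | refl => simp at hl
  | tail huv hvw =>
    obtain ⟨rfl, hC⟩ := List.append_inj' hl rfl
    exact ⟨_, huv, (List.singleton_inj.1 hC) ▸ hvw⟩

theorem exists_of_append {u v : List (Symbol T g.NT)} {l₁ l₂ : List g.NT}
    (h : LmTrace g u v (l₁ ++ l₂)) : ∃ x, LmTrace g u x l₁ ∧ LmTrace g x v l₂ := by
  induction l₂ using List.reverseRecOn generalizing v with
  | nil => exact ⟨v, by simpa using h, .refl v⟩
  | append_singleton l₂ C ih =>
    rw [← List.append_assoc] at h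
    obtain ⟨v', huv', hstep⟩ := h.exists_of_snoc
    obtain ⟨x, hux, hxv'⟩ := ih huv'
    exact ⟨x, hux, hxv'.tail hstep⟩

theorem exists_of_cons {u v : List (Symbol T g.NT)} {C : g.NT} {l : List g.NT}
    (h : LmTrace g u v (C :: l)) : ∃ x, LeftmostStep g u x C ∧ LmTrace g x v l := by
  obtain ⟨x, hux, hxv⟩ := exists_of_append (l₁ := [C]) (l₂ := l) h
  obtain ⟨u', huu', hstep⟩ := exists_of_snoc (l := []) hux
  exact ⟨x, huu'.eq_of_nil ▸ hstep, hxv⟩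

end LmTrace

theorem LeftmostStep.eq_of_eq_map_terminal_append {u v : List (Symbol T g.NT)} {C B : g.NT}
    {q : List T} {s : List (Symbol T g.NT)} (h : LeftmostStep g u v C)
    (hu : u = q.map Symbol.terminal ++ Symbol.nonterminal B :: s) : C = B := by
  obtain ⟨-, -, -, p, s', hu', -⟩ := h
  rw [hu'] at hu
  clear hu'
  induction p generalizing q with
  | nil => cases q <;> simp_all
  | cons x p ih =>
    cases q with
    | nil => simp at hu
    | cons y q =>
      simp only [List.map_cons, List.cons_append, List.cons.injEq] at hu
      exact ih hu.2

theorem LmTrace.head?_eq_of_eq_map_terminal_append {v : List (Symbol T g.NT)} {w : List T}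
    {l : List g.NT} {B : g.NT} {q : List T} {s : List (Symbol T g.NT)}
    (h : LmTrace g v (w.map Symbol.terminal) l)
    (hv : v = q.map Symbol.terminal ++ Symbol.nonterminal B :: s) : l.head? = some B := by
  cases l with
  | nil =>
    have hB : Symbol.nonterminal B ∈ w.map (Symbol.terminal (N := g.NT)) := by
      simp [← h.eq_of_nil, hv]
    simp at hB
  | cons C l =>
    obtain ⟨x, hvx, -⟩ := h.exists_of_cons
    simp [hvx.eq_of_eq_map_terminal_append hv]

namespace IsDyckNF

variable {A B : g.NT}

theorem ne_initial_of_mem_output (hg : IsDyckNF g) {r : ContextFreeRule T g.NT}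
    (hr : r ∈ g.rules) (hA : Symbol.nonterminal A ∈ r.output) : A ≠ g.initial := by
  rintro rfl
  exact hg.1.2 r hr hA

theorem exists_output_eq_terminal (hg : IsDyckNF g) (hA : RewritesToTerminal g A)
    (hAS : A ≠ g.initial) {r : ContextFreeRule T g.NT} (hr : r ∈ g.rules) (hin : r.input = A) :
    ∃ a : T, r.output = [Symbol.terminal a] := by
  obtain ⟨rA, hrA, hrAin, a, hrAout⟩ := hA
  exact ⟨a, hg.2.1 rA hrA a hrAout (hrAin ▸ hAS) r hr (hin.trans hrAin.symm) ▸ hrAout⟩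

theorem followedBy_output_append (hg : IsDyckNF g)
    (hpair : ∃ r ∈ g.rules, r.output = [Symbol.nonterminal A, Symbol.nonterminal B])
    {r : ContextFreeRule T g.NT} (hr : r ∈ g.rules) {s : List (Symbol T g.NT)}
    (hs : FollowedBy (Symbol.nonterminal A) (Symbol.nonterminal B) s) :
    FollowedBy (Symbol.nonterminal A) (Symbol.nonterminal B) (r.output ++ s) := by
  obtain ⟨r₀, hr₀, hr₀out⟩ := hpair
  rcases hg.1.1 r hr with ⟨X, Y, hXY⟩ | ⟨a, ha⟩ | ⟨-, h0⟩
  · have hYA : Y ≠ A := fun hYA => hg.2.2.1 r₀ hr₀ r hr A B X hr₀out (hYA ▸ hXY)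
    have hXA : X = A → Y = B := (hg.2.2.2 r hr r₀ hr₀ X A Y B hXY hr₀out).2
    simpa [hXY, hYA, hs] using hXA
  · simp [ha, hs]
  · simp [h0, hs]

end IsDyckNF

section FollowedByDerivation

variable {A B : g.NT} {u v : List (Symbol T g.NT)}

theorem LeftmostStep.followedBy (hg : IsDyckNF g)
    (hpair : ∃ r ∈ g.rules, r.output = [Symbol.nonterminal A, Symbol.nonterminal B])
    {C : g.NT} (h : LeftmostStep g u v C)
    (hu : FollowedBy (Symbol.nonterminal A) (Symbol.nonterminal B) u) :
    FollowedBy (Symbol.nonterminal A) (Symbol.nonterminal B) v := by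
  obtain ⟨r, hr, -, p, s, rfl, rfl⟩ := h
  rw [List.append_assoc]
  refine followedBy_append (by simp) (hg.followedBy_output_append hpair hr ?_)
  exact (followedBy_cons.1 hu.of_append).2

theorem LmTrace.followedBy (hg : IsDyckNF g)
    (hpair : ∃ r ∈ g.rules, r.output = [Symbol.nonterminal A, Symbol.nonterminal B])
    {l : List g.NT} (h : LmTrace g u v l)
    (hu : FollowedBy (Symbol.nonterminal A) (Symbol.nonterminal B) u) :
    FollowedBy (Symbol.nonterminal A) (Symbol.nonterminal B) v := by
  induction h with
  | refl => exact hu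
  | tail _ hstep ih => exact hstep.followedBy hg hpair ih

theorem LeftmostStep.exists_eq_map_terminal_append_of_followedBy
    (hA : ∀ r ∈ g.rules, r.input = A → ∃ a : T, r.output = [Symbol.terminal a])
    (h : LeftmostStep g u v A)
    (hu : FollowedBy (Symbol.nonterminal A) (Symbol.nonterminal B) u) :
    ∃ (q : List T) (s : List (Symbol T g.NT)),
      v = q.map Symbol.terminal ++ Symbol.nonterminal B :: s := by
  obtain ⟨r, hr, hin, p, s, rfl, rfl⟩ := h
  obtain ⟨a, ha⟩ := hA r hr hin
  obtain ⟨s', rfl⟩ : ∃ s', s = Symbol.nonterminal B :: s' :=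
    List.head?_eq_some_iff.1 ((followedBy_cons.1 hu.of_append).1 rfl)
  exact ⟨p ++ [a], s', by simp [ha]⟩

end FollowedByDerivation

/-- In a grammar in Dyck normal form, if `([ᵢ, ]ᵢ)` is a bracket pair whose
left bracket rewrites to a terminal (`φ([ᵢ) ∈ T`, i.e. the pair lies in `N⁽¹⁾ ∪ N⁽²⁾_l`),
then in any trace-word every occurrence of `[ᵢ` is immediately followed by `]ᵢ`. -/
theorem n1_left_bracket_followed (g : ContextFreeGrammar T) (hg : IsDyckNF g)
    (w : List T) (t : List g.NT) (ht : IsTraceWord g w t) (A B : g.NT)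
    (hpair : ∃ r ∈ g.rules, r.output = [Symbol.nonterminal A, Symbol.nonterminal B])
    (hA : RewritesToTerminal g A) :
    ∀ m : ℕ, t[m]? = some A → t[m + 1]? = some B := by
  intro m hm
  have hAS : A ≠ g.initial := by
    obtain ⟨r₀, hr₀, hr₀out⟩ := hpair
    exact hg.ne_initial_of_mem_output hr₀ (by simp [hr₀out])
  have hsplit : g.initial :: t = (g.initial :: t.take m) ++ A :: t.drop (m + 1) := by
    obtain ⟨hmt, rfl⟩ := List.getElem?_eq_some_iff.1 hm
    rw [← List.drop_eq_getElem_cons hmt, List.cons_append, List.take_append_drop]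
  obtain ⟨x, hSx, hxw⟩ := LmTrace.exists_of_append (hsplit ▸ ht.2)
  obtain ⟨y, hxy, hyw⟩ := hxw.exists_of_cons
  have hx := hSx.followedBy hg hpair (by simp [Ne.symm hAS])
  obtain ⟨q, s, hy⟩ := hxy.exists_eq_map_terminal_append_of_followedBy
    (fun _ => hg.exists_output_eq_terminal hA hAS) hx
  simpa using hyw.head?_eq_of_eq_map_terminal_append hy

end CS
end

section
/- (Chomsky–Schützenberger theorem) For each context-free language L there exist an integer K, a regular language R over the 2K bracket symbols, and a monoid homomorphism h from strings over the bracket symbols to strings over the terminal alphabet, such that L = h(D_K ∩ R). -/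
namespace CS

/-! ### Grammars: Chomsky and Dyck normal forms -/

variable {T : Type}

/-!
Write a derivation tree of a grammar `g` as a word of brackets indexed by pairs `(ρ, i)` of a rule
`ρ` and a position `i` in its right-hand side: the subtree grown from the `i`-th symbol of a node
expanded by `ρ` is wrapped in `[₍ρ,i₎ … ]₍ρ,i₎` (with nothing inside when that symbol is a
terminal), and a node expanded by an empty rule becomes `[₍ρ,0₎ ]₍ρ,0₎`. These words are Dyck
words, and the homomorphism sending `[₍ρ,i₎` to the terminal at position `i` of `ρ` (if any) and
erasing all other brackets recovers the yield of the tree.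

Which bracket may follow which is decided by the two brackets alone, so the words with an
admissible first letter, last letter and adjacent pairs form a regular (local) language `R`.
Conversely, in a Dyck word `[c u ]c v` of `R` the local constraints force `u` to encode the subtree
below `[c` and `v` the following siblings, so by induction on the length `D ∩ R` consists exactly
of the encodings of derivation trees.
-/

section Dyck

variable {k : ℕ}

lemma IsDyck.exists_eq_cons_append {w : List (Bracket k)} (hw : IsDyck w) :
    ∃ c u v, w = (c, true) :: u ++ (c, false) :: v ∧ (u = [] ∨ IsDyck u) ∧ (v = [] ∨ IsDyck v) := by
  induction hw with
  | pair i => exact ⟨i, [], [], rfl, .inl rfl, .inl rfl⟩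
  | wrap i hw => exact ⟨i, _, [], by simp, .inr hw, .inl rfl⟩
  | @concat u v _ hv ihu =>
    obtain ⟨c, a, b, rfl, ha, hb⟩ := ihu
    refine ⟨c, a, b ++ v, by simp, ha, .inr ?_⟩
    rcases hb with rfl | hb
    exacts [hv, hb.concat hv]

lemma IsDyck.head?_eq {w : List (Bracket k)} (hw : IsDyck w) : ∃ c, w.head? = some (c, true) := by
  obtain ⟨c, u, v, rfl, -, -⟩ := hw.exists_eq_cons_append
  exact ⟨c, rfl⟩

lemma IsDyck.getLast?_eq {w : List (Bracket k)} (hw : IsDyck w) :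
    ∃ c, w.getLast? = some (c, false) := by
  induction hw with
  | pair i => exact ⟨i, rfl⟩
  | wrap i _ => exact ⟨i, List.getLast?_concat⟩
  | concat _ _ _ ihv =>
    obtain ⟨c, hc⟩ := ihv
    exact ⟨c, by simp [List.getLast?_append, hc]⟩

end Dyck

section LocalLanguage

variable {α : Type*} (P Q : α → Prop) (F : α → α → Prop)

def localLanguage : Language α :=
  {d | (∃ a ∈ d.head?, P a) ∧ (∃ b ∈ d.getLast?, Q b) ∧ d.IsChain F}

/-- The state `some (some b)` remembers the last letter read; `none` is a sink. -/
noncomputable def localDFA : DFA α (Option (Option α)) := by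
  classical
  exact
  { step := fun
      | some none, a => if P a then some (some a) else none
      | some (some b), a => if F b a then some (some a) else none
      | none, _ => none
    start := some none
    accept := {s | ∃ b, s = some (some b) ∧ Q b} }

variable {P Q F}

lemma localDFA_evalFrom_none (d : List α) : (localDFA P Q F).evalFrom none d = none := by
  induction d with
  | nil => rfl
  | cons a d ih => exact ih

lemma localDFA_evalFrom_some_iff (d : List α) (b c : α) :
    (localDFA P Q F).evalFrom (some (some b)) d = some (some c) ↔
      (b :: d).IsChain F ∧ (b :: d).getLast? = some c := by
  induction d generalizing b with
  | nil => simp [eq_comm]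
  | cons a d ih =>
    rw [DFA.evalFrom_cons, List.isChain_cons_cons, List.getLast?_cons_cons]
    by_cases hba : F b a
    · rw [show (localDFA P Q F).step (some (some b)) a = some (some a) from if_pos hba, ih]
      simp [hba]
    · rw [show (localDFA P Q F).step (some (some b)) a = none from if_neg hba,
        localDFA_evalFrom_none]
      simp [hba]

lemma localDFA_accepts : (localDFA P Q F).accepts = localLanguage P Q F := by
  ext (_ | ⟨a, d⟩)
  · exact iff_of_false (by rintro ⟨b, ⟨⟩, -⟩) (by rintro ⟨⟨a, ⟨⟩, -⟩, -⟩)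
  rw [DFA.mem_accepts, DFA.eval, DFA.evalFrom_cons]
  by_cases ha : P a
  · rw [show (localDFA P Q F).step (localDFA P Q F).start a = some (some a) from if_pos ha]
    show (∃ b, _ = some (some b) ∧ Q b) ↔
      (∃ a' ∈ (a :: d).head?, P a') ∧ (∃ b ∈ (a :: d).getLast?, Q b) ∧ (a :: d).IsChain F
    simp only [localDFA_evalFrom_some_iff]
    simp only [List.head?_cons, Option.mem_def, Option.some.injEq, exists_eq_left', ha, true_and]
    exact ⟨fun ⟨b, ⟨hc, hl⟩, hq⟩ => ⟨⟨b, hl, hq⟩, hc⟩, fun ⟨⟨b, hl, hq⟩, hc⟩ => ⟨b, ⟨hc, hl⟩, hq⟩⟩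
  · rw [show (localDFA P Q F).step (localDFA P Q F).start a = none from if_neg ha,
      localDFA_evalFrom_none]
    exact iff_of_false (by rintro ⟨b, ⟨⟩, -⟩) (by rintro ⟨⟨a, ⟨⟩, h⟩, -⟩; exact ha h)

theorem isRegular_localLanguage [Fintype α] : (localLanguage P Q F).IsRegular :=
  Language.isRegular_iff.2 ⟨_, inferInstance, localDFA P Q F, localDFA_accepts⟩

end LocalLanguage

lemma _root_.ContextFreeRule.Rewrites.append_split {N : Type*} {r : ContextFreeRule T N}
    {u v x : List (Symbol T N)} (h : r.Rewrites (u ++ v) x) :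
    (∃ u', r.Rewrites u u' ∧ x = u' ++ v) ∨ (∃ v', r.Rewrites v v' ∧ x = u ++ v') := by
  induction u generalizing x with
  | nil => exact .inr ⟨x, h, rfl⟩
  | cons a u ih =>
    cases h with
    | head s => exact .inl ⟨_, .head u, by simp⟩
    | cons _ h =>
      rcases ih h with ⟨u', hu, rfl⟩ | ⟨v', hv, rfl⟩
      exacts [.inl ⟨a :: u', hu.cons a, rfl⟩, .inr ⟨v', hv, rfl⟩]

lemma _root_.ContextFreeRule.rewrites_nonterminal_iff {N : Type*} {r : ContextFreeRule T N}
    {A : N} {v : List (Symbol T N)} :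
    r.Rewrites [.nonterminal A] v ↔ r.input = A ∧ v = r.output := by
  constructor
  · rintro (_ | ⟨_, ⟨⟩⟩)
    simp
  · rintro ⟨rfl, rfl⟩
    exact .input_output

lemma _root_.List.ne_nil_of_getElem?_eq_some {α : Type*} {l : List α} {i : ℕ} {a : α}
    (h : l[i]? = some a) : l ≠ [] := by
  rintro rfl
  simp at h

section Derivations

variable {g : ContextFreeGrammar T}

inductive DerivesIn (g : ContextFreeGrammar T) :
    List (Symbol T g.NT) → List (Symbol T g.NT) → ℕ → Prop
  | refl (u : List (Symbol T g.NT)) : DerivesIn g u u 0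
  | head {u v w : List (Symbol T g.NT)} {n : ℕ} (h : g.Produces u v) (hd : DerivesIn g v w n) :
      DerivesIn g u w (n + 1)

lemma exists_derivesIn_of_derives {u w : List (Symbol T g.NT)} (h : g.Derives u w) :
    ∃ n, DerivesIn g u w n := by
  induction h using Relation.ReflTransGen.head_induction_on with
  | refl => exact ⟨0, .refl w⟩
  | head h _ ih =>
    obtain ⟨n, hn⟩ := ih
    exact ⟨n + 1, .head h hn⟩

lemma DerivesIn.eq_of_map_terminal {w : List T} {v : List (Symbol T g.NT)} {n : ℕ}
    (h : DerivesIn g (w.map .terminal) v n) : v = w.map .terminal := by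
  cases h with
  | refl => rfl
  | head h =>
    obtain ⟨r, -, hr⟩ := h
    simpa using hr.nonterminal_input_mem

lemma DerivesIn.append_split {u v w : List (Symbol T g.NT)} {n : ℕ}
    (h : DerivesIn g (u ++ v) w n) :
    ∃ w₁ w₂ n₁ n₂, w = w₁ ++ w₂ ∧ n₁ + n₂ = n ∧ DerivesIn g u w₁ n₁ ∧ DerivesIn g v w₂ n₂ := by
  generalize hs : u ++ v = s at h
  induction h generalizing u v with
  | refl => exact ⟨u, v, 0, 0, hs.symm, rfl, .refl u, .refl v⟩
  | head hp _ ih =>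
    subst hs
    obtain ⟨r, hr, hrw⟩ := hp
    rcases hrw.append_split with ⟨u', hu, rfl⟩ | ⟨v', hv, rfl⟩
    · obtain ⟨w₁, w₂, n₁, n₂, rfl, rfl, h₁, h₂⟩ := ih rfl
      exact ⟨w₁, w₂, n₁ + 1, n₂, rfl, by omega, .head ⟨r, hr, hu⟩ h₁, h₂⟩
    · obtain ⟨w₁, w₂, n₁, n₂, rfl, rfl, h₁, h₂⟩ := ih rfl
      exact ⟨w₁, w₂, n₁, n₂ + 1, rfl, by omega, h₁, .head ⟨r, hr, hv⟩ h₂⟩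

end Derivations

section Encoding

variable {g : ContextFreeGrammar T}

abbrev Rule (g : ContextFreeGrammar T) : Type := {r : ContextFreeRule T g.NT // r ∈ g.rules}

def width (g : ContextFreeGrammar T) : ℕ := g.rules.sup (fun r => r.output.length) + 1

instance (g : ContextFreeGrammar T) : NeZero (width g) := ⟨Nat.succ_ne_zero _⟩

abbrev bracketCount (g : ContextFreeGrammar T) : ℕ := Fintype.card (Rule g × Fin (width g))

def arity (ρ : Rule g) : ℕ := ρ.1.output.length

lemma arity_lt_width (ρ : Rule g) : arity ρ < width g :=
  Nat.lt_succ_of_le (Finset.le_sup (f := fun r => r.output.length) ρ.2)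

lemma lt_arity_of_getElem? {ρ : Rule g} {i : ℕ} {s : Symbol T g.NT}
    (h : ρ.1.output[i]? = some s) : i < arity ρ :=
  (List.getElem?_eq_some_iff.1 h).1

lemma lt_width_of_getElem? {ρ : Rule g} {i : ℕ} {s : Symbol T g.NT}
    (h : ρ.1.output[i]? = some s) : i < width g :=
  (lt_arity_of_getElem? h).trans (arity_lt_width ρ)

lemma drop_eq_cons_of_getElem? {ρ : Rule g} {i : ℕ} {s : Symbol T g.NT}
    (h : ρ.1.output[i]? = some s) : ρ.1.output.drop i = s :: ρ.1.output.drop (i + 1) := by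
  obtain ⟨hi, rfl⟩ := List.getElem?_eq_some_iff.1 h
  exact List.drop_eq_getElem_cons hi

/-- Positions are read modulo `width g`, which exceeds the arity of every rule. -/
noncomputable def index (ρ : Rule g) (i : ℕ) : Fin (bracketCount g) :=
  Fintype.equivFin _ (ρ, Fin.ofNat _ i)

noncomputable def opening (ρ : Rule g) (i : ℕ) : Bracket (bracketCount g) := (index ρ i, true)

noncomputable def closing (ρ : Rule g) (i : ℕ) : Bracket (bracketCount g) := (index ρ i, false)

lemma index_inj {ρ σ : Rule g} {i j : ℕ} (hi : i < width g) (hj : j < width g)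
    (h : index ρ i = index σ j) : ρ = σ ∧ i = j := by
  have := Prod.ext_iff.1 ((Fintype.equivFin _).injective h)
  simpa [Fin.ext_iff, Nat.mod_eq_of_lt hi, Nat.mod_eq_of_lt hj] using this

def terminalAt (ρ : Rule g) (i : ℕ) : List T :=
  match ρ.1.output[i]? with
  | some (.terminal a) => [a]
  | _ => []

noncomputable def bracketHom (g : ContextFreeGrammar T) : Bracket (bracketCount g) → List T
  | (c, true) => terminalAt ((Fintype.equivFin _).symm c).1 ((Fintype.equivFin _).symm c).2
  | (_, false) => []

lemma bracketHom_opening {ρ : Rule g} {i : ℕ} (hi : i < width g) :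
    bracketHom g (opening ρ i) = terminalAt ρ i := by
  simp [bracketHom, opening, index, Nat.mod_eq_of_lt hi]

@[simp] lemma bracketHom_closing (ρ : Rule g) (i : ℕ) : bracketHom g (closing ρ i) = [] := rfl

inductive Follows (g : ContextFreeGrammar T) :
    Bracket (bracketCount g) → Bracket (bracketCount g) → Prop
  | terminal (ρ : Rule g) (i : ℕ) (a : T) (h : ρ.1.output[i]? = some (.terminal a)) :
      Follows g (opening ρ i) (closing ρ i)
  | empty (ρ : Rule g) (h : ρ.1.output = []) : Follows g (opening ρ 0) (closing ρ 0)
  | down (ρ σ : Rule g) (i : ℕ) (h : ρ.1.output[i]? = some (.nonterminal σ.1.input)) :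
      Follows g (opening ρ i) (opening σ 0)
  | next (ρ : Rule g) (i : ℕ) (h : i + 1 < arity ρ) : Follows g (closing ρ i) (opening ρ (i + 1))
  | up (σ ρ : Rule g) (i : ℕ) (h : ρ.1.output[i]? = some (.nonterminal σ.1.input)) :
      Follows g (closing σ (arity σ - 1)) (closing ρ i)

noncomputable def encodingLanguage (g : ContextFreeGrammar T) :
    Language (Bracket (bracketCount g)) :=
  localLanguage (fun b => ∃ ρ : Rule g, ρ.1.input = g.initial ∧ b = opening ρ 0)
    (fun b => ∃ ρ : Rule g, ρ.1.input = g.initial ∧ b = closing ρ (arity ρ - 1)) (Follows g)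

/-- `Encodes ρ i d`: `d` encodes a forest of derivation trees, one below each symbol of the
right-hand side of `ρ` from position `i` on; `Encodes ρ 0 d` encodes a tree with root rule `ρ`. -/
inductive Encodes : Rule g → ℕ → List (Bracket (bracketCount g)) → Prop
  | empty (ρ : Rule g) (h : ρ.1.output = []) : Encodes ρ 0 [opening ρ 0, closing ρ 0]
  | done (ρ : Rule g) (h : ρ.1.output ≠ []) : Encodes ρ (arity ρ) []
  | terminal (ρ : Rule g) (i : ℕ) (a : T) (h : ρ.1.output[i]? = some (.terminal a))
      {v : List (Bracket (bracketCount g))} (hv : Encodes ρ (i + 1) v) :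
      Encodes ρ i (opening ρ i :: closing ρ i :: v)
  | nonterminal (ρ σ : Rule g) (i : ℕ) (h : ρ.1.output[i]? = some (.nonterminal σ.1.input))
      {u v : List (Bracket (bracketCount g))} (hu : Encodes σ 0 u) (hv : Encodes ρ (i + 1) v) :
      Encodes ρ i (opening ρ i :: u ++ closing ρ i :: v)

variable {ρ : Rule g} {i : ℕ} {d : List (Bracket (bracketCount g))}

lemma Encodes.lt_arity (h : Encodes ρ i d) (hd : d ≠ []) (hρ : ρ.1.output ≠ []) :
    i < arity ρ := by
  cases h with
  | empty _ h => exact absurd h hρ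
  | done => exact absurd rfl hd
  | terminal _ _ _ h => exact lt_arity_of_getElem? h
  | nonterminal _ _ _ h => exact lt_arity_of_getElem? h

lemma Encodes.head?_getLast? (h : Encodes ρ i d) :
    (d = [] ∧ 0 < i ∧ i = arity ρ) ∨
      (d.head? = some (opening ρ i) ∧ d.getLast? = some (closing ρ (arity ρ - 1))) := by
  induction h with
  | empty ρ h => simp [arity, h]
  | done ρ h => exact .inl ⟨rfl, List.length_pos_iff.2 h, rfl⟩
  | terminal ρ i a h _ ih =>
    refine .inr ⟨rfl, ?_⟩
    rcases ih with ⟨rfl, -, hi⟩ | ⟨-, hv⟩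
    · simp [show i = arity ρ - 1 by omega]
    · simp [List.getLast?_cons, hv]
  | nonterminal ρ σ i h _ _ _ ih =>
    refine .inr ⟨rfl, ?_⟩
    rw [List.getLast?_append_cons]
    rcases ih with ⟨rfl, -, hi⟩ | ⟨-, hv⟩
    · simp [show i = arity ρ - 1 by omega]
    · simp [List.getLast?_cons, hv]

lemma Encodes.isDyck (h : Encodes ρ i d) : d = [] ∨ IsDyck d := by
  induction h with
  | empty ρ _ => exact .inr (.pair _)
  | done => exact .inl rfl
  | terminal ρ i _ _ _ ih =>
    refine .inr ?_
    rcases ih with rfl | ih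
    exacts [.pair _, .concat (.pair _) ih]
  | @nonterminal ρ σ i _ u _ _ _ ihu ihv =>
    refine .inr ?_
    have hwrap : IsDyck (opening ρ i :: u ++ [closing ρ i]) := by
      rcases ihu with rfl | ihu
      exacts [.pair _, .wrap _ ihu]
    rcases ihv with rfl | ihv
    · simpa using hwrap
    · simpa using hwrap.concat ihv

lemma Encodes.isChain_closing_cons (h : Encodes ρ (i + 1) d) (hd : d.IsChain (Follows g))
    (hρ : ρ.1.output ≠ []) : (closing ρ i :: d).IsChain (Follows g) := by
  refine List.isChain_cons.2 ⟨fun y hy => ?_, hd⟩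
  rcases h.head?_getLast? with ⟨rfl, -⟩ | ⟨hhead, -⟩
  · cases hy
  · obtain rfl : y = opening ρ (i + 1) := by simpa [hhead] using hy.symm
    exact .next ρ i (h.lt_arity (by rintro rfl; cases hhead) hρ)

lemma Encodes.isChain (h : Encodes ρ i d) : d.IsChain (Follows g) := by
  induction h with
  | empty ρ h => exact List.isChain_pair.2 (.empty ρ h)
  | done => exact .nil
  | terminal ρ i a h hv ih =>
    exact List.isChain_cons_cons.2
      ⟨.terminal ρ i a h, hv.isChain_closing_cons ih (List.ne_nil_of_getElem?_eq_some h)⟩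
  | @nonterminal ρ σ i h u _ hu hv ihu ihv =>
    obtain ⟨-, h0, -⟩ | ⟨hhead, hlast⟩ := hu.head?_getLast?
    · exact absurd h0 (lt_irrefl 0)
    have hdown : ∀ y ∈ u.head?, Follows g (opening ρ i) y := by
      intro y hy
      obtain rfl : y = opening σ 0 := by simpa [hhead] using hy.symm
      exact .down ρ σ i h
    have hup : ∀ x ∈ (opening ρ i :: u).getLast?, ∀ y ∈ [closing ρ i].head?, Follows g x y := by
      intro x hx y hy
      obtain rfl : y = closing ρ i := by simpa using hy.symm
      obtain rfl : x = closing σ (arity σ - 1) := by simpa [List.getLast?_cons, hlast] using hx.symm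
      exact .up σ ρ i h
    exact List.isChain_split.2
      ⟨List.isChain_append.2 ⟨List.isChain_cons.2 ⟨hdown, ihu⟩, .singleton _, hup⟩,
        hv.isChain_closing_cons ihv (List.ne_nil_of_getElem?_eq_some h)⟩

lemma Encodes.derives (h : Encodes ρ i d) :
    g.Derives (ρ.1.output.drop i) ((d.flatMap (bracketHom g)).map .terminal) := by
  induction h with
  | empty ρ h =>
    simpa [bracketHom_opening (NeZero.pos (width g)), terminalAt, h] using .refl []
  | done ρ _ => simpa [arity] using .refl []
  | terminal ρ i a h _ ih =>
    rw [drop_eq_cons_of_getElem? h, List.flatMap_cons, List.flatMap_cons,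
      bracketHom_opening (lt_width_of_getElem? h), terminalAt, h]
    simpa using ih.append_left [.terminal a]
  | @nonterminal ρ σ i h u _ _ _ ihu ihv =>
    rw [drop_eq_cons_of_getElem? h, List.flatMap_append, List.flatMap_cons, List.flatMap_cons,
      bracketHom_opening (lt_width_of_getElem? h), terminalAt, h]
    have hσ : g.Derives [.nonterminal σ.1.input] ((u.flatMap (bracketHom g)).map .terminal) :=
      Relation.ReflTransGen.head ⟨σ.1, σ.2, .input_output⟩ (by simpa using ihu)
    simpa using (hσ.append_right _).trans (ihv.append_left _)

lemma exists_encodes_of_derivesIn_drop (ρ : Rule g) (hρ : ρ.1.output ≠ []) {m : ℕ}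
    (ih : ∀ n ≤ m, ∀ {A : g.NT} {w : List T},
      DerivesIn g [.nonterminal A] (w.map .terminal) n →
        ∃ σ : Rule g, σ.1.input = A ∧ ∃ d, Encodes σ 0 d ∧ d.flatMap (bracketHom g) = w)
    {i n : ℕ} {w : List T} (hi : i ≤ arity ρ) (hn : n ≤ m)
    (h : DerivesIn g (ρ.1.output.drop i) (w.map .terminal) n) :
    ∃ d, Encodes ρ i d ∧ d.flatMap (bracketHom g) = w := by
  rcases hi.eq_or_lt with rfl | hi
  · simp only [arity, List.drop_length] at h
    obtain rfl : w = [] := by simpa using (h.eq_of_map_terminal (w := [])).symm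
    exact ⟨[], .done ρ hρ, rfl⟩
  have hget : ρ.1.output[i]? = some ρ.1.output[i] := List.getElem?_eq_getElem hi
  have hiw : i < width g := hi.trans (arity_lt_width ρ)
  rw [drop_eq_cons_of_getElem? hget, ← List.singleton_append] at h
  obtain ⟨w₁, w₂, n₁, n₂, hw, hn', h₁, h₂⟩ := h.append_split
  obtain ⟨w₁, w₂, rfl, rfl, rfl⟩ := List.map_eq_append_iff.1 hw
  obtain ⟨v, hv, rfl⟩ := exists_encodes_of_derivesIn_drop ρ hρ ih hi (by omega) h₂
  cases hs : ρ.1.output[i] with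
  | terminal a =>
    rw [hs] at hget h₁
    obtain rfl : w₁ = [a] := by simpa using h₁.eq_of_map_terminal (w := [a])
    refine ⟨_, .terminal ρ i a hget hv, ?_⟩
    simp [bracketHom_opening hiw, terminalAt, hget]
  | nonterminal A =>
    rw [hs] at hget h₁
    obtain ⟨σ, rfl, u, hu, rfl⟩ := ih n₁ (by omega) h₁
    refine ⟨_, .nonterminal ρ σ i hget hu hv, ?_⟩
    simp [bracketHom_opening hiw, terminalAt, hget]
termination_by arity ρ - i

theorem exists_encodes_of_derivesIn {A : g.NT} {w : List T} {n : ℕ}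
    (h : DerivesIn g [.nonterminal A] (w.map .terminal) n) :
    ∃ ρ : Rule g, ρ.1.input = A ∧ ∃ d, Encodes ρ 0 d ∧ d.flatMap (bracketHom g) = w := by
  generalize hA : [Symbol.nonterminal A] = s at h
  cases h with
  | refl => cases w <;> simp at hA
  | @head _ _ _ n hp hd =>
    subst hA
    obtain ⟨r, hr, hrw⟩ := hp
    obtain ⟨rfl, rfl⟩ := ContextFreeRule.rewrites_nonterminal_iff.1 hrw
    refine ⟨⟨r, hr⟩, rfl, ?_⟩
    by_cases hout : r.output = []
    · rw [hout] at hd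
      obtain rfl : w = [] := by simpa using (hd.eq_of_map_terminal (w := [])).symm
      exact ⟨_, .empty ⟨r, hr⟩ hout, by simp [bracketHom_opening (NeZero.pos (width g)),
        terminalAt, hout]⟩
    -- the symbols of `r.output` are derived in at most `n` steps each
    · exact exists_encodes_of_derivesIn_drop ⟨r, hr⟩ hout
        (fun _ _ _ _ h => exists_encodes_of_derivesIn h) (Nat.zero_le _) le_rfl (by simpa using hd)
termination_by n

lemma follows_opening_closing (hi : i < width g) (h : Follows g (opening ρ i) (closing ρ i)) :
    (∃ a, ρ.1.output[i]? = some (.terminal a)) ∨ (ρ.1.output = [] ∧ i = 0) := by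
  generalize hx : opening ρ i = x, hy : closing ρ i = y at h
  cases h with
  | terminal σ j a h =>
    obtain ⟨rfl, rfl⟩ := index_inj hi (lt_width_of_getElem? h) (congrArg Prod.fst hx)
    exact .inl ⟨a, h⟩
  | empty σ h =>
    obtain ⟨rfl, rfl⟩ := index_inj hi (NeZero.pos _) (congrArg Prod.fst hx)
    exact .inr ⟨h, rfl⟩
  | down | next | up => simp [opening, closing] at hx hy

lemma follows_opening_opening {c : Fin (bracketCount g)} (hi : i < width g)
    (h : Follows g (opening ρ i) (c, true)) :
    ∃ σ : Rule g, ρ.1.output[i]? = some (.nonterminal σ.1.input) ∧ c = index σ 0 := by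
  generalize hx : opening ρ i = x, hy : (c, true) = y at h
  cases h with
  | down ρ' σ j h =>
    obtain ⟨rfl, rfl⟩ := index_inj hi (lt_width_of_getElem? h) (congrArg Prod.fst hx)
    exact ⟨σ, h, congrArg Prod.fst hy⟩
  | terminal | empty | next | up => simp [opening, closing] at hx hy

lemma follows_closing_opening {c : Fin (bracketCount g)} (hi : i < width g)
    (h : Follows g (closing ρ i) (c, true)) : i + 1 < arity ρ ∧ c = index ρ (i + 1) := by
  generalize hx : closing ρ i = x, hy : (c, true) = y at h
  cases h with
  | next ρ' j h =>
    obtain ⟨rfl, rfl⟩ := index_inj hi (by have := arity_lt_width ρ'; omega) (congrArg Prod.fst hx)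
    exact ⟨h, congrArg Prod.fst hy⟩
  | terminal | empty | down | up => simp [opening, closing] at hx hy

lemma follows_closing_closing {c c' : Fin (bracketCount g)} (h : Follows g (c, false) (c', false)) :
    ∃ τ : Rule g, c = index τ (arity τ - 1) := by
  generalize hx : (c, false) = x, hy : (c', false) = y at h
  cases h with
  | up τ => exact ⟨τ, congrArg Prod.fst hx⟩
  | terminal | empty | down | next => simp [opening, closing] at hx hy

lemma encodes_child_of_isChain {u : List (Bracket (bracketCount g))} (hi : i < width g)
    (hu : u = [] ∨ IsDyck u)
    (hch : (opening ρ i :: u ++ [closing ρ i]).IsChain (Follows g))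
    (ih : ∀ σ : Rule g, IsDyck u → u.IsChain (Follows g) → u.head? = some (opening σ 0) →
      (∃ τ : Rule g, u.getLast? = some (closing τ (arity τ - 1))) → Encodes σ 0 u) :
    (∃ a, ρ.1.output[i]? = some (.terminal a) ∧ u = []) ∨ (ρ.1.output = [] ∧ i = 0 ∧ u = []) ∨
      ∃ σ : Rule g, ρ.1.output[i]? = some (.nonterminal σ.1.input) ∧ Encodes σ 0 u := by
  rcases hu with rfl | hu
  · rcases follows_opening_closing hi (List.isChain_pair.1 hch) with ⟨a, ha⟩ | ⟨hρ, rfl⟩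
    exacts [.inl ⟨a, ha, rfl⟩, .inr (.inl ⟨hρ, rfl, rfl⟩)]
  obtain ⟨c, hc⟩ := hu.head?_eq
  obtain ⟨c', hc'⟩ := hu.getLast?_eq
  obtain ⟨hch₁, -, hjoin⟩ := List.isChain_append.1 hch
  obtain ⟨hfirst, hchu⟩ := List.isChain_cons.1 hch₁
  obtain ⟨σ, hσ, rfl⟩ := follows_opening_opening hi (hfirst _ hc)
  obtain ⟨τ, rfl⟩ := follows_closing_closing
    (hjoin (c', false) (by simp [List.getLast?_cons, hc']) (closing ρ i) rfl)
  exact .inr (.inr ⟨σ, hσ, ih σ hu hchu hc ⟨τ, hc'⟩⟩)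

lemma encodes_siblings_of_isChain {v : List (Bracket (bracketCount g))} (hi : i < width g)
    (hv : v = [] ∨ IsDyck v)
    (hch : (closing ρ i :: v).IsChain (Follows g))
    (hlast : ∃ τ : Rule g, (closing ρ i :: v).getLast? = some (closing τ (arity τ - 1)))
    (ih : i + 1 ≤ arity ρ → IsDyck v → v.IsChain (Follows g) →
      v.head? = some (opening ρ (i + 1)) →
      (∃ τ : Rule g, v.getLast? = some (closing τ (arity τ - 1))) → Encodes ρ (i + 1) v) :
    (v = [] ∧ arity ρ ≤ i + 1) ∨ (i + 1 < arity ρ ∧ Encodes ρ (i + 1) v) := by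
  obtain ⟨τ, hτ⟩ := hlast
  rcases hv with rfl | hv
  · simp only [closing, List.getLast?_singleton, Option.some.injEq, Prod.mk.injEq, and_true] at hτ
    obtain ⟨rfl, rfl⟩ := index_inj hi ((Nat.sub_le _ _).trans_lt (arity_lt_width τ)) hτ
    exact .inl ⟨rfl, by omega⟩
  obtain ⟨c, hc⟩ := hv.head?_eq
  obtain ⟨c', hc'⟩ := hv.getLast?_eq
  obtain ⟨hnext, hchv⟩ := List.isChain_cons.1 hch
  obtain ⟨hlt, rfl⟩ := follows_closing_opening hi (hnext _ hc)
  simp only [List.getLast?_cons, hc', Option.getD_some] at hτ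
  exact .inr ⟨hlt, ih hlt.le hv hchv hc ⟨τ, hc'.trans hτ⟩⟩

theorem encodes_of_isDyck {ρ : Rule g} {i : ℕ} {d : List (Bracket (bracketCount g))} (hd : IsDyck d)
    (hch : d.IsChain (Follows g)) (hi : i ≤ arity ρ) (hhead : d.head? = some (opening ρ i))
    (hlast : ∃ τ : Rule g, d.getLast? = some (closing τ (arity τ - 1))) : Encodes ρ i d := by
  obtain ⟨c, u, v, rfl, hu, hv⟩ := hd.exists_eq_cons_append
  obtain rfl : c = index ρ i := by simpa [opening] using hhead
  have hiw : i < width g := hi.trans_lt (arity_lt_width ρ)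
  obtain ⟨hchu, hchv⟩ := List.isChain_split.1 hch
  have hchild := encodes_child_of_isChain hiw hu hchu fun σ hu hchu hhead hlast =>
    encodes_of_isDyck hu hchu (Nat.zero_le _) hhead hlast
  have hsiblings := encodes_siblings_of_isChain hiw hv hchv
    (hlast.imp fun _ h => by rwa [List.getLast?_append_cons] at h)
    fun hi hv hchv hhead hlast => encodes_of_isDyck hv hchv hi hhead hlast
  have hnext {s : Symbol T g.NT} (hs : ρ.1.output[i]? = some s) : Encodes ρ (i + 1) v := by
    rcases hsiblings with ⟨rfl, hle⟩ | ⟨-, hv⟩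
    · have := lt_arity_of_getElem? hs
      rw [show i + 1 = arity ρ by omega]
      exact .done ρ (List.ne_nil_of_getElem?_eq_some hs)
    · exact hv
  rcases hchild with ⟨a, ha, rfl⟩ | ⟨hρ, rfl, rfl⟩ | ⟨σ, hσ, hu⟩
  · exact .terminal ρ i a ha (hnext ha)
  · obtain ⟨rfl, -⟩ | ⟨hlt, -⟩ := hsiblings
    · exact .empty ρ hρ
    · simp [arity, hρ] at hlt
  · exact .nonterminal ρ σ i hσ hu (hnext hσ)
termination_by d.length

theorem mem_language_iff_exists_encodes {w : List T} :
    w ∈ g.language ↔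
      ∃ ρ : Rule g, ρ.1.input = g.initial ∧ ∃ d, Encodes ρ 0 d ∧ d.flatMap (bracketHom g) = w := by
  rw [ContextFreeGrammar.mem_language_iff]
  constructor
  · intro h
    obtain ⟨n, hn⟩ := exists_derivesIn_of_derives h
    exact exists_encodes_of_derivesIn hn
  · rintro ⟨ρ, hρ, d, hd, rfl⟩
    rw [← hρ]
    exact .head ⟨ρ.1, ρ.2, .input_output⟩ (by simpa using hd.derives)

theorem isDyck_and_mem_encodingLanguage_iff {d : List (Bracket (bracketCount g))} :
    IsDyck d ∧ d ∈ encodingLanguage g ↔ ∃ ρ : Rule g, ρ.1.input = g.initial ∧ Encodes ρ 0 d := by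
  constructor
  · rintro ⟨hd, ⟨b, hb, ρ, hρ, rfl⟩, ⟨b', hb', τ, -, rfl⟩, hch⟩
    exact ⟨ρ, hρ, encodes_of_isDyck hd hch (Nat.zero_le _) hb ⟨τ, hb'⟩⟩
  · rintro ⟨ρ, hρ, hd⟩
    rcases hd.head?_getLast? with ⟨-, h0, -⟩ | ⟨hhead, hlast⟩
    · exact absurd h0 (lt_irrefl 0)
    refine ⟨hd.isDyck.resolve_left (by rintro rfl; cases hhead), ⟨_, hhead, ρ, hρ, rfl⟩,
      ⟨_, hlast, ρ, hρ, rfl⟩, hd.isChain⟩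

end Encoding

/-- **Chomsky–Schützenberger theorem.** For each context-free language `L`
there exist an integer `K`, a regular language `R` over the `2K` brackets, and a monoid
homomorphism `h` (given by its action on single brackets, extended by `List.flatMap`) such
that `L = h(D_K ∩ R)`. -/
theorem chomsky_schuetzenberger (L : Language T) (hL : L.IsContextFree) :
    ∃ (K : ℕ) (R : Language (Bracket K)) (h : Bracket K → List T),
      R.IsRegular ∧ ∀ w : List T, w ∈ L ↔ ∃ d, IsDyck d ∧ d ∈ R ∧ d.flatMap h = w := by
  obtain ⟨g, rfl⟩ := hL
  refine ⟨bracketCount g, encodingLanguage g, bracketHom g, isRegular_localLanguage, fun w => ?_⟩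
  rw [mem_language_iff_exists_encodes]
  constructor
  · rintro ⟨ρ, hρ, d, hd, rfl⟩
    obtain ⟨hD, hR⟩ := isDyck_and_mem_encodingLanguage_iff.2 ⟨ρ, hρ, hd⟩
    exact ⟨d, hD, hR, rfl⟩
  · rintro ⟨d, hD, hR, rfl⟩
    obtain ⟨ρ, hρ, hd⟩ := isDyck_and_mem_encodingLanguage_iff.1 ⟨hD, hR⟩
    exact ⟨ρ, hρ, d, hd, rfl⟩

end CS
end
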